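/- arXiv:1912.07989 — 5 statements merged into one kernel-verified Lean document; each statement's English description precedes it below -/
import Mathlib

section
/- For t > 0, the function ln(t) - ψ(t) is positive, and t^α(ln t - ψ(t)) is completely monotonic on (0,∞) if and only if α ≤ 1, where ψ is the digamma function. -/
open Set MeasureTheory Filter Topology

noncomputable def phi (s : ℝ) : ℝ := (1 - Real.exp (-s))⁻¹ - s⁻¹
noncomputable def phid (s : ℝ) : ℝ := (s^2)⁻¹ - Real.exp (-s) / (1 - Real.exp (-s))^2
noncomputable def phiT (s : ℝ) : ℝ := if s ≤ 0 then 1/2 else phi s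

lemma one_sub_exp_pos {s : ℝ} (hs : 0 < s) : 0 < 1 - Real.exp (-s) := by
  have : Real.exp (-s) < 1 := Real.exp_lt_one_iff.2 (by linarith)
  linarith

lemma one_sub_exp_le (s : ℝ) : 1 - Real.exp (-s) ≤ s := by
  have := Real.add_one_le_exp (-s)
  linarith

lemma mul_exp_le_one_sub_exp (s : ℝ) : s * Real.exp (-s) ≤ 1 - Real.exp (-s) := by
  have h1 := Real.add_one_le_exp s
  have h2 : 0 < Real.exp (-s) := Real.exp_pos _
  have h3 : (s + 1) * Real.exp (-s) ≤ Real.exp s * Real.exp (-s) :=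
    mul_le_mul_of_nonneg_right h1 h2.le
  rw [← Real.exp_add] at h3
  simp at h3
  nlinarith

lemma phi_eq {s : ℝ} (hs : 0 < s) :
    phi s = (s - 1 + Real.exp (-s)) / (s * (1 - Real.exp (-s))) := by
  have h1 := one_sub_exp_pos hs
  unfold phi
  field_simp
  ring

lemma phi_nonneg {s : ℝ} (hs : 0 < s) : 0 ≤ phi s := by
  rw [phi_eq hs]
  have h1 := one_sub_exp_pos hs
  have h2 := Real.add_one_le_exp (-s)
  apply div_nonneg (by linarith) (by positivity)

lemma phi_le_one {s : ℝ} (hs : 0 < s) : phi s ≤ 1 := by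
  rw [phi_eq hs]
  have h1 := one_sub_exp_pos hs
  rw [div_le_one (by positivity)]
  have := mul_exp_le_one_sub_exp s
  nlinarith [Real.exp_pos (-s)]

lemma hasDerivAt_phi {s : ℝ} (hs : 0 < s) : HasDerivAt phi (phid s) s := by
  have h1 := one_sub_exp_pos hs
  have hu : HasDerivAt (fun x : ℝ => 1 - Real.exp (-x)) (Real.exp (-s)) s := by
    have : HasDerivAt (fun x : ℝ => Real.exp (-x)) (-Real.exp (-s)) s := by
      simpa [Function.comp_def] using (Real.hasDerivAt_exp (-s)).comp s ((hasDerivAt_id s).neg)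
    simpa using (this.const_sub 1)
  have hinv : HasDerivAt (fun x : ℝ => (1 - Real.exp (-x))⁻¹)
      (-(Real.exp (-s)) / (1 - Real.exp (-s))^2) s := hu.inv (by linarith)
  have hs2 : HasDerivAt (fun x : ℝ => x⁻¹) (-(s^2)⁻¹) s := by
    simpa using hasDerivAt_inv hs.ne'
  have := hinv.sub hs2
  refine this.congr_deriv ?_
  simp only [phid]
  ring

lemma phid_nonneg {s : ℝ} (hs : 0 < s) : 0 ≤ phid s := by
  have h1 := one_sub_exp_pos hs
  have key : s * Real.exp (-s/2) ≤ 1 - Real.exp (-s) := by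
    have hsinh : s/2 ≤ Real.sinh (s/2) := Real.self_le_sinh_iff.2 (by linarith)
    rw [Real.sinh_eq] at hsinh
    have hmul : (s/2) * Real.exp (-(s/2)) ≤ ((Real.exp (s/2) - Real.exp (-(s/2)))/2) * Real.exp (-(s/2)) :=
      mul_le_mul_of_nonneg_right hsinh (Real.exp_pos _).le
    have he : Real.exp (s/2) * Real.exp (-(s/2)) = 1 := by
      rw [← Real.exp_add]; simp
    have he2 : Real.exp (-(s/2)) * Real.exp (-(s/2)) = Real.exp (-s) := by
      rw [← Real.exp_add]; ring_nf
    have h : Real.exp (-s/2) = Real.exp (-(s/2)) := by congr 1; ring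
    rw [h]
    nlinarith [Real.exp_pos (-(s/2))]
  have key2 : s^2 * Real.exp (-s) ≤ (1 - Real.exp (-s))^2 := by
    have h0 : 0 ≤ s * Real.exp (-s/2) := by positivity
    have := mul_self_le_mul_self h0 key
    have he2 : Real.exp (-s/2) * Real.exp (-s/2) = Real.exp (-s) := by
      rw [← Real.exp_add]; ring_nf
    nlinarith
  have h2 : Real.exp (-s) / (1 - Real.exp (-s))^2 ≤ (s^2)⁻¹ := by
    rw [show ((s^2)⁻¹ : ℝ) = 1/s^2 by rw [one_div], div_le_div_iff₀ (by positivity) (by positivity)]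
    nlinarith
  simp only [phid]
  linarith

lemma phiT_eq_phi {s : ℝ} (hs : 0 < s) : phiT s = phi s := by
  simp [phiT, not_le.2 hs]

lemma phiT_eventually_eq (s : ℝ) (hs : 0 < s) : phiT =ᶠ[𝓝 s] phi := by
  filter_upwards [eventually_gt_nhds hs] with x hx using phiT_eq_phi hx

lemma hasDerivAt_phiT {s : ℝ} (hs : 0 < s) : HasDerivAt phiT (phid s) s :=
  (hasDerivAt_phi hs).congr_of_eventuallyEq (phiT_eventually_eq s hs)

lemma tendsto_phi_atTop : Tendsto phi atTop (𝓝 1) := by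
  have h1 : Tendsto (fun s : ℝ => (1 - Real.exp (-s))⁻¹) atTop (𝓝 1) := by
    have : Tendsto (fun s : ℝ => 1 - Real.exp (-s)) atTop (𝓝 1) := by
      simpa using tendsto_const_nhds.sub (Real.tendsto_exp_neg_atTop_nhds_zero)
    simpa using this.inv₀ one_ne_zero
  have h2 : Tendsto (fun s : ℝ => s⁻¹) atTop (𝓝 0) := tendsto_inv_atTop_zero
  have h3 := h1.sub h2
  rw [sub_zero] at h3
  exact h3

lemma tendsto_phiT_atTop : Tendsto phiT atTop (𝓝 1) := by
  apply tendsto_phi_atTop.congr'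
  filter_upwards [eventually_gt_atTop 0] with x hx using (phiT_eq_phi hx).symm

lemma tendsto_phi_zero : Tendsto phi (𝓝[>] (0:ℝ)) (𝓝 (1/2)) := by
  have hA : Tendsto (fun s : ℝ => (s - 1 + Real.exp (-s)) / s^2) (𝓝[>] (0:ℝ)) (𝓝 (1/2)) := by
    refine tendsto_of_tendsto_of_tendsto_of_le_of_le'
      (g := fun s : ℝ => 1/2 - (2/9)*s) (h := fun s : ℝ => 1/2 + (2/9)*s) ?_ ?_ ?_ ?_
    · have : Tendsto (fun s : ℝ => 1/2 - (2/9)*s) (𝓝 (0:ℝ)) (𝓝 (1/2)) := by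
        have h1 : Tendsto (fun s : ℝ => (2/9:ℝ)*s) (𝓝 (0:ℝ)) (𝓝 ((2/9:ℝ)*0)) :=
          (continuous_const.mul continuous_id).tendsto 0
        have h2 := tendsto_const_nhds (f := 𝓝 (0:ℝ)) (x := (1/2:ℝ))
        simpa using h2.sub h1
      exact this.mono_left nhdsWithin_le_nhds
    · have : Tendsto (fun s : ℝ => 1/2 + (2/9)*s) (𝓝 (0:ℝ)) (𝓝 (1/2)) := by
        have h1 : Tendsto (fun s : ℝ => (2/9:ℝ)*s) (𝓝 (0:ℝ)) (𝓝 ((2/9:ℝ)*0)) :=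
          (continuous_const.mul continuous_id).tendsto 0
        have h2 := tendsto_const_nhds (f := 𝓝 (0:ℝ)) (x := (1/2:ℝ))
        simpa using h2.add h1
      exact this.mono_left nhdsWithin_le_nhds
    · filter_upwards [Ioo_mem_nhdsGT_of_mem (by norm_num : (0:ℝ) ∈ Ico 0 1)] with s hs
      obtain ⟨hs0, hs1⟩ := hs
      have hb := Real.exp_bound (x := -s) (by rw [abs_of_nonpos (by linarith)]; linarith) (n := 3) (by norm_num)
      have hsum : ∑ m ∈ Finset.range 3, (-s)^m / (m.factorial : ℝ) = 1 - s + s^2/2 := by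
        simp [Finset.sum_range_succ, Nat.factorial]
        ring
      rw [hsum] at hb
      have habs : |(-s)|^3 * ((3:ℕ).succ / ((3:ℕ).factorial * (3:ℕ) : ℝ)) = (2/9)*s^3 := by
        rw [abs_of_nonpos (by linarith)]
        norm_num [Nat.factorial]
        ring
      rw [habs] at hb
      have hb' := abs_le.1 hb
      rw [le_div_iff₀ (by positivity)]
      nlinarith
    · filter_upwards [Ioo_mem_nhdsGT_of_mem (by norm_num : (0:ℝ) ∈ Ico 0 1)] with s hs
      obtain ⟨hs0, hs1⟩ := hs
      have hb := Real.exp_bound (x := -s) (by rw [abs_of_nonpos (by linarith)]; linarith) (n := 3) (by norm_num)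
      have hsum : ∑ m ∈ Finset.range 3, (-s)^m / (m.factorial : ℝ) = 1 - s + s^2/2 := by
        simp [Finset.sum_range_succ, Nat.factorial]
        ring
      rw [hsum] at hb
      have habs : |(-s)|^3 * ((3:ℕ).succ / ((3:ℕ).factorial * (3:ℕ) : ℝ)) = (2/9)*s^3 := by
        rw [abs_of_nonpos (by linarith)]
        norm_num [Nat.factorial]
        ring
      rw [habs] at hb
      have hb' := abs_le.1 hb
      rw [div_le_iff₀ (by positivity)]
      nlinarith
  have hB : Tendsto (fun s : ℝ => (1 - Real.exp (-s)) / s) (𝓝[>] (0:ℝ)) (𝓝 1) := by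
    have hd : HasDerivAt (fun x : ℝ => 1 - Real.exp (-x)) 1 0 := by
      have : HasDerivAt (fun x : ℝ => Real.exp (-x)) (-Real.exp (-0)) 0 := by
        simpa [Function.comp_def] using (Real.hasDerivAt_exp (-0)).comp 0 ((hasDerivAt_id 0).neg)
      simpa using (this.const_sub 1)
    have := hasDerivAt_iff_tendsto_slope.1 hd
    have h2 : Tendsto (slope (fun x : ℝ => 1 - Real.exp (-x)) 0) (𝓝[>] (0:ℝ)) (𝓝 1) :=
      this.mono_left (nhdsWithin_mono _ (fun x hx => by simp [mem_Ioi.1 hx]; exact ne_of_gt hx))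
    apply h2.congr'
    filter_upwards [self_mem_nhdsWithin] with s hs
    rw [slope_def_field]
    norm_num
  have := hA.div hB one_ne_zero
  norm_num at this
  apply this.congr'
  filter_upwards [self_mem_nhdsWithin] with s hs
  have hs0 : (0:ℝ) < s := hs
  have h1 := one_sub_exp_pos hs0
  rw [phi_eq hs0, Pi.div_apply]
  field_simp

lemma pow_mul_exp_le {c s : ℝ} (hc : 0 < c) (hs : 0 ≤ s) (n : ℕ) :
    s^n * Real.exp (-(c*s)) ≤ (n.factorial : ℝ) / c^n := by
  have h0 : 0 ≤ c*s := by positivity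
  have h1 : (c*s)^n / (n.factorial : ℝ) ≤ Real.exp (c*s) := by
    calc (c*s)^n / (n.factorial : ℝ)
        ≤ ∑ i ∈ Finset.range (n+1), (c*s)^i / (i.factorial : ℝ) := by
          apply Finset.single_le_sum (f := fun i => (c*s)^i / (i.factorial : ℝ))
            (fun i _ => by positivity) (Finset.self_mem_range_succ n)
      _ ≤ Real.exp (c*s) := Real.sum_le_exp_of_nonneg h0 _
  rw [Real.exp_neg, mul_inv_le_iff₀ (Real.exp_pos _), div_mul_eq_mul_div,
    le_div_iff₀ (by positivity)]
  calc s^n * c^n = (c*s)^n := by rw [mul_pow]; ring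
    _ ≤ (n.factorial : ℝ) * Real.exp (c*s) := by
        rw [div_le_iff₀ (by positivity)] at h1; linarith

lemma contOn_phi : ContinuousOn phi (Ioi 0) := by
  have h2 : ContinuousOn (fun s : ℝ => (1 - Real.exp (-s))⁻¹) (Ioi 0) := by
    apply ContinuousOn.inv₀ (continuous_const.sub (Real.continuous_exp.comp continuous_neg)).continuousOn
    exact fun x hx => (one_sub_exp_pos (mem_Ioi.1 hx)).ne'
  exact h2.sub (continuousOn_inv₀.mono (fun x hx => (ne_of_gt (mem_Ioi.1 hx))))

lemma contOn_phid : ContinuousOn phid (Ioi 0) := by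
  have h1 : ContinuousOn (fun s : ℝ => (s^2)⁻¹) (Ioi 0) := by
    apply ContinuousOn.inv₀ (continuous_pow 2).continuousOn
    intro x hx; have := mem_Ioi.1 hx; positivity
  have h2 : ContinuousOn (fun s : ℝ => Real.exp (-s)/(1 - Real.exp (-s))^2) (Ioi 0) := by
    apply ContinuousOn.div (Real.continuous_exp.comp continuous_neg).continuousOn
      (((continuous_const.sub (Real.continuous_exp.comp continuous_neg)).pow 2).continuousOn)
    intro x hx
    have := one_sub_exp_pos (mem_Ioi.1 hx); exact pow_ne_zero _ this.ne'
  exact h1.sub h2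

lemma integrable_phid : IntegrableOn phid (Ioi 0) := by
  apply integrableOn_Ioi_deriv_of_nonneg _ (fun x hx => hasDerivAt_phiT (mem_Ioi.1 hx))
    (fun x hx => phid_nonneg (mem_Ioi.1 hx)) tendsto_phiT_atTop
  rw [← continuousWithinAt_Ioi_iff_Ici]
  have h0 : phiT 0 = 1/2 := by simp [phiT]
  unfold ContinuousWithinAt
  rw [h0]
  apply tendsto_phi_zero.congr'
  filter_upwards [self_mem_nhdsWithin] with s hs using (phiT_eq_phi hs).symm

lemma integrable_exp_c {c : ℝ} (hc : 0 < c) :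
    IntegrableOn (fun s : ℝ => Real.exp (-(c*s))) (Ioi 0) := by
  simpa [neg_mul] using exp_neg_integrableOn_Ioi 0 hc

lemma integral_exp_c {c : ℝ} (hc : 0 < c) :
    ∫ s in Ioi (0:ℝ), Real.exp (-(c*s)) = 1/c := by
  have := integral_Ioi_of_hasDerivAt_of_tendsto (f := fun s : ℝ => -Real.exp (-(c*s))/c)
    (f' := fun s : ℝ => Real.exp (-(c*s))) (a := 0) (m := 0) ?_ ?_ (integrable_exp_c hc) ?_
  · rw [this]; simp; field_simp
  · apply Continuous.continuousWithinAt
    fun_prop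
  · intro x _
    have h1 : HasDerivAt (fun s : ℝ => -(c*s)) (-c) x := by
      simpa using ((hasDerivAt_id x).const_mul c).fun_neg
    have h2 : HasDerivAt (fun s : ℝ => Real.exp (-(c*s))) (Real.exp (-(c*x)) * (-c)) x :=
      (Real.hasDerivAt_exp _).comp x h1
    have := (h2.neg).div_const c
    refine this.congr_deriv ?_
    field_simp
  · have h1 : Tendsto (fun s : ℝ => Real.exp (-(c*s))) atTop (𝓝 0) := by
      apply Real.tendsto_exp_atBot.comp
      apply tendsto_neg_atBot_iff.2
      exact (tendsto_const_mul_atTop_of_pos hc).2 tendsto_id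
    have := (h1.div_const c).neg
    simpa [neg_div] using this

lemma integrable_exp_phi {t : ℝ} (ht : 0 < t) :
    IntegrableOn (fun s : ℝ => Real.exp (-(t*s)) * phi s) (Ioi 0) := by
  apply Integrable.mono (integrable_exp_c ht)
    (((by fun_prop : Continuous fun s : ℝ => Real.exp (-(t*s))).continuousOn.mul
      contOn_phi).aestronglyMeasurable measurableSet_Ioi)
  rw [ae_restrict_iff' measurableSet_Ioi]
  apply ae_of_all
  intro s hs
  have hs0 := mem_Ioi.1 hs
  simp only [Real.norm_eq_abs, Pi.mul_apply]
  rw [abs_of_nonneg (mul_nonneg (Real.exp_pos _).le (phi_nonneg hs0)),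
    abs_of_nonneg (Real.exp_pos _).le]
  nlinarith [phi_le_one hs0, phi_nonneg hs0, Real.exp_pos (-(t*s))]

lemma integrable_pow_exp_phid {t : ℝ} (ht : 0 < t) (n : ℕ) :
    IntegrableOn (fun s : ℝ => s^n * Real.exp (-(t*s)) * phid s) (Ioi 0) := by
  apply Integrable.mono (integrable_phid.const_mul ((n.factorial : ℝ)/t^n))
  · apply ContinuousOn.aestronglyMeasurable _ measurableSet_Ioi
    exact (((by fun_prop : Continuous fun s : ℝ => s^n * Real.exp (-(t*s))).continuousOn).mul contOn_phid)
  · rw [ae_restrict_iff' measurableSet_Ioi]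
    apply ae_of_all
    intro s hs
    have hs0 := mem_Ioi.1 hs
    have hd := phid_nonneg hs0
    have hb := pow_mul_exp_le ht hs0.le n
    have hfac : (0:ℝ) ≤ (n.factorial : ℝ)/t^n := by positivity
    simp only [Real.norm_eq_abs]
    rw [abs_of_nonneg (by positivity), abs_of_nonneg (by positivity)]
    have h1 : 0 ≤ (n.factorial : ℝ)/t^n - s^n * Real.exp (-(t*s)) := by linarith
    nlinarith

noncomputable def W (t : ℝ) : ℝ := ∫ s in Ioi (0:ℝ), Real.exp (-(t*s)) * (1 - Real.exp (-s)) / s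

lemma integrable_W_integrand {t : ℝ} (ht : 0 < t) :
    IntegrableOn (fun s : ℝ => Real.exp (-(t*s)) * (1 - Real.exp (-s)) / s) (Ioi 0) := by
  apply Integrable.mono (integrable_exp_c ht)
  · apply ContinuousOn.aestronglyMeasurable _ measurableSet_Ioi
    apply ContinuousOn.div
      ((by fun_prop : Continuous fun s : ℝ => Real.exp (-(t*s)) * (1 - Real.exp (-s))).continuousOn)
      continuousOn_id
    exact fun x hx => ne_of_gt (mem_Ioi.1 hx)
  · rw [ae_restrict_iff' measurableSet_Ioi]
    apply ae_of_all
    intro s hs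
    have hs0 := mem_Ioi.1 hs
    have h1 := one_sub_exp_pos hs0
    have h2 := one_sub_exp_le s
    simp only [Real.norm_eq_abs]
    rw [abs_of_nonneg (by positivity), abs_of_nonneg (Real.exp_pos _).le,
      div_le_iff₀ hs0]
    nlinarith [Real.exp_pos (-(t*s))]

lemma ball_pos {t x : ℝ} (ht : 0 < t) (hx : x ∈ Metric.ball t (t/2)) : t/2 < x := by
  rw [Metric.mem_ball, Real.dist_eq, abs_lt] at hx
  linarith [hx.1]

lemma hasDerivAt_W {t : ℝ} (ht : 0 < t) :
    HasDerivAt W (-(1/t - 1/(t+1))) t := by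
  have key := hasDerivAt_integral_of_dominated_loc_of_deriv_le (μ := volume.restrict (Ioi 0))
    (F := fun (x : ℝ) (s : ℝ) => Real.exp (-(x*s)) * (1 - Real.exp (-s)) / s)
    (F' := fun (x : ℝ) (s : ℝ) => -(Real.exp (-(x*s)) * (1 - Real.exp (-s))))
    (x₀ := t) (s := Metric.ball t (t/2)) (bound := fun s => Real.exp (-(t/2*s)))
    (Metric.ball_mem_nhds t (by positivity)) ?_ (integrable_W_integrand ht) ?_ ?_ (integrable_exp_c (by positivity)) ?_
  · have h2 : (∫ s in Ioi (0:ℝ), -(Real.exp (-(t*s)) * (1 - Real.exp (-s)))) = -(1/t - 1/(t+1)) := by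
      have e1 : ∀ s ∈ Ioi (0:ℝ), -(Real.exp (-(t*s)) * (1 - Real.exp (-s)))
          = -(Real.exp (-(t*s)) - Real.exp (-((t+1)*s))) := by
        intro s _
        rw [show -((t+1)*s) = -(t*s) + -s by ring, Real.exp_add]
        ring
      rw [setIntegral_congr_fun measurableSet_Ioi e1, integral_neg, integral_sub
        (integrable_exp_c ht) (integrable_exp_c (by positivity)),
        integral_exp_c ht, integral_exp_c (by positivity : (0:ℝ) < t+1)]
    rw [← h2]
    exact key.2
  · apply Eventually.of_forall
    intro x
    apply ContinuousOn.aestronglyMeasurable _ measurableSet_Ioi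
    apply ContinuousOn.div
      ((by fun_prop : Continuous fun s : ℝ => Real.exp (-(x*s)) * (1 - Real.exp (-s))).continuousOn)
      continuousOn_id
    exact fun y hy => ne_of_gt (mem_Ioi.1 hy)
  · apply ContinuousOn.aestronglyMeasurable _ measurableSet_Ioi
    exact ((by fun_prop : Continuous fun s : ℝ => -(Real.exp (-(t*s)) * (1 - Real.exp (-s)))).continuousOn)
  · rw [ae_restrict_iff' measurableSet_Ioi]
    apply ae_of_all
    intro s hs x hx
    have hs0 := mem_Ioi.1 hs
    have hx2 := ball_pos ht hx
    have h1 := one_sub_exp_pos hs0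
    have h2 : Real.exp (-(x*s)) ≤ Real.exp (-(t/2*s)) := by
      apply Real.exp_le_exp.2
      nlinarith
    rw [norm_neg, Real.norm_eq_abs, abs_of_nonneg (by positivity)]
    nlinarith [Real.exp_pos (-(x*s)), Real.exp_pos (-s)]
  · rw [ae_restrict_iff' measurableSet_Ioi]
    apply ae_of_all
    intro s hs x hx
    have hs0 := mem_Ioi.1 hs
    have h1 : HasDerivAt (fun x : ℝ => Real.exp (-(x*s))) (Real.exp (-(x*s)) * (-s)) x := by
      apply (Real.hasDerivAt_exp _).comp
      simpa using ((hasDerivAt_id x).mul_const s).fun_neg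
    have := h1.mul_const ((1 - Real.exp (-s)) / s)
    refine (this.congr_of_eventuallyEq (Eventually.of_forall fun y => ?_)).congr_deriv ?_
    · ring
    · field_simp

lemma eq_on_Ioi_of_deriv {f g d : ℝ → ℝ}
    (hf : ∀ t, 0 < t → HasDerivAt f (d t) t) (hg : ∀ t, 0 < t → HasDerivAt g (d t) t)
    (hlim : Tendsto (fun t => f t - g t) atTop (𝓝 0)) : ∀ t, 0 < t → f t = g t := by
  intro t ht
  have hconst : ∀ b, t ≤ b → f b - g b = f t - g t := by
    intro b hb
    have h := constant_of_has_deriv_right_zero (f := fun x => f x - g x) (a := t) (b := b) ?_ ?_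
    · exact h b ⟨hb, le_rfl⟩
    · intro x hx
      have hx0 : 0 < x := lt_of_lt_of_le ht hx.1
      exact ((hf x hx0).sub (hg x hx0)).continuousAt.continuousWithinAt
    · intro x hx
      have hx0 : 0 < x := lt_of_lt_of_le ht hx.1
      have := (hf x hx0).sub (hg x hx0)
      rw [sub_self] at this
      exact this.hasDerivWithinAt
  have h2 : Tendsto (fun b => f b - g b) atTop (𝓝 (f t - g t)) := by
    apply tendsto_const_nhds.congr'
    filter_upwards [eventually_ge_atTop t] with b hb using (hconst b hb).symm
  have := tendsto_nhds_unique h2 hlim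
  linarith

lemma W_eq_log {t : ℝ} (ht : 0 < t) : W t = Real.log (t+1) - Real.log t := by
  have hL : ∀ t : ℝ, 0 < t →
      HasDerivAt (fun t : ℝ => Real.log (t+1) - Real.log t) (-(1/t - 1/(t+1))) t := by
    intro x hx
    have h1 : HasDerivAt (fun t : ℝ => Real.log (t+1)) (x+1)⁻¹ x := by
      have := (Real.hasDerivAt_log (by positivity : x+1 ≠ 0)).comp x ((hasDerivAt_id x).add_const 1)
      simpa [Function.comp_def] using this
    have := h1.sub (Real.hasDerivAt_log hx.ne')
    refine this.congr_deriv ?_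
    field_simp
    ring
  apply eq_on_Ioi_of_deriv (fun x hx => hasDerivAt_W hx) hL _ t ht
  have hW0 : Tendsto W atTop (𝓝 0) := by
    apply squeeze_zero' (t₀ := atTop)
    · filter_upwards [eventually_gt_atTop 0] with x hx
      exact setIntegral_nonneg measurableSet_Ioi (fun s hs => by
        have hs0 := mem_Ioi.1 hs
        have h1 := one_sub_exp_pos hs0
        positivity)
    · filter_upwards [eventually_gt_atTop 0] with x hx
      calc W x ≤ ∫ s in Ioi (0:ℝ), Real.exp (-(x*s)) := by
            apply setIntegral_mono_on (integrable_W_integrand hx) (integrable_exp_c hx)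
              measurableSet_Ioi
            intro s hs
            have hs0 := mem_Ioi.1 hs
            have h1 := one_sub_exp_pos hs0
            have h2 := one_sub_exp_le s
            rw [div_le_iff₀ hs0]
            nlinarith [Real.exp_pos (-(x*s))]
        _ = 1/x := integral_exp_c hx
    · exact tendsto_inv_atTop_zero.congr (fun x => (one_div x).symm)
  have hLog0 : Tendsto (fun x : ℝ => Real.log (x+1) - Real.log x) atTop (𝓝 0) := by
    have h1 : Tendsto (fun x : ℝ => 1 + 1/x) atTop (𝓝 1) := by
      have : Tendsto (fun x : ℝ => 1/x) atTop (𝓝 0) := by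
        exact tendsto_inv_atTop_zero.congr (fun x => (one_div x).symm)
      simpa using tendsto_const_nhds.add this
    have h2 : Tendsto (fun x : ℝ => Real.log (1 + 1/x)) atTop (𝓝 0) := by
      have := (Real.continuousAt_log one_ne_zero).tendsto.comp h1
      simpa [Function.comp_def] using this
    apply h2.congr'
    filter_upwards [eventually_gt_atTop 0] with x hx
    rw [← Real.log_div (by positivity) (ne_of_gt hx)]
    congr 1
    field_simp
  have := hW0.sub hLog0
  simpa using this

noncomputable def G (t : ℝ) : ℝ := ∫ s in Ioi (0:ℝ), Real.exp (-(t*s)) * phi s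

lemma G_nonneg {t : ℝ} (_ht : 0 < t) : 0 ≤ G t :=
  setIntegral_nonneg measurableSet_Ioi fun s hs =>
    mul_nonneg (Real.exp_pos _).le (phi_nonneg (mem_Ioi.1 hs))

lemma G_le {t : ℝ} (ht : 0 < t) : G t ≤ 1/t := by
  calc G t ≤ ∫ s in Ioi (0:ℝ), Real.exp (-(t*s)) := by
        apply setIntegral_mono_on (integrable_exp_phi ht) (integrable_exp_c ht) measurableSet_Ioi
        intro s hs
        have hs0 := mem_Ioi.1 hs
        nlinarith [phi_le_one hs0, phi_nonneg hs0, Real.exp_pos (-(t*s))]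
    _ = 1/t := integral_exp_c ht

lemma G_rec {t : ℝ} (ht : 0 < t) :
    G t = G (t+1) + 1/t - (Real.log (t+1) - Real.log t) := by
  have ht1 : (0:ℝ) < t + 1 := by linarith
  have key : G t - G (t+1) = 1/t - W t := by
    have h1 : G t - G (t+1) = ∫ s in Ioi (0:ℝ),
        (Real.exp (-(t*s)) * phi s - Real.exp (-((t+1)*s)) * phi s) := by
      rw [integral_sub (integrable_exp_phi ht) (integrable_exp_phi ht1)]; rfl
    have h2 : ∀ s ∈ Ioi (0:ℝ), Real.exp (-(t*s)) * phi s - Real.exp (-((t+1)*s)) * phi s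
        = Real.exp (-(t*s)) - Real.exp (-(t*s)) * (1 - Real.exp (-s)) / s := by
      intro s hs
      have hs0 := mem_Ioi.1 hs
      have hE := one_sub_exp_pos hs0
      rw [show -((t+1)*s) = -(t*s) + -s by ring, Real.exp_add, phi]
      field_simp
    rw [h1, setIntegral_congr_fun measurableSet_Ioi h2,
      integral_sub (integrable_exp_c ht) (integrable_W_integrand ht), integral_exp_c ht]
    rfl
  have := W_eq_log ht
  linarith

noncomputable def psi (t : ℝ) : ℝ := deriv (fun x => Real.log (Real.Gamma x)) t

lemma diff_logGamma {x : ℝ} (hx : 0 < x) :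
    DifferentiableAt ℝ (fun x => Real.log (Real.Gamma x)) x := by
  have h : ∀ m : ℕ, x ≠ -(m:ℝ) := by
    intro m
    have h1 : -(m:ℝ) ≤ 0 := neg_nonpos.2 (Nat.cast_nonneg m)
    exact ne_of_gt (lt_of_le_of_lt h1 hx)
  exact (Real.differentiableAt_Gamma h).log (Real.Gamma_ne_zero h)

lemma log_Gamma_rec {x : ℝ} (hx : 0 < x) :
    Real.log (Real.Gamma (x+1)) = Real.log (Real.Gamma x) + Real.log x := by
  rw [Real.Gamma_add_one hx.ne', Real.log_mul hx.ne' (Real.Gamma_pos_of_pos hx).ne']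
  ring

lemma psi_rec {x : ℝ} (hx : 0 < x) : psi (x+1) = psi x + 1/x := by
  unfold psi
  rw [← deriv_comp_add_const (fun y => Real.log (Real.Gamma y)) 1 x]
  have heq : (fun y => Real.log (Real.Gamma (y+1)))
      =ᶠ[𝓝 x] (fun y => Real.log (Real.Gamma y) + Real.log y) := by
    filter_upwards [eventually_gt_nhds hx] with y hy using log_Gamma_rec hy
  rw [heq.deriv_eq, deriv_fun_add (diff_logGamma hx) (Real.differentiableAt_log hx.ne'),
    Real.deriv_log x, one_div]

lemma psi_le_log {x : ℝ} (hx : 0 < x) : psi x ≤ Real.log x := by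
  have h := Real.convexOn_log_Gamma.deriv_le_slope (x := x) (y := x+1)
    (mem_Ioi.2 hx) (mem_Ioi.2 (by linarith)) (by linarith) (diff_logGamma hx)
  rw [slope_def_field] at h
  have he : (Real.log ∘ Real.Gamma) (x+1) = (Real.log ∘ Real.Gamma) x + Real.log x :=
    log_Gamma_rec hx
  have : psi x = deriv (Real.log ∘ Real.Gamma) x := rfl
  rw [this]
  rw [he] at h
  simpa using h

lemma log_le_psi {x : ℝ} (hx : 1 < x) : Real.log (x-1) ≤ psi x := by
  have hx0 : (0:ℝ) < x := by linarith
  have hx1 : (0:ℝ) < x - 1 := by linarith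
  have h := Real.convexOn_log_Gamma.slope_le_deriv (x := x-1) (y := x)
    (mem_Ioi.2 hx1) (mem_Ioi.2 hx0) (by linarith) (diff_logGamma hx0)
  rw [slope_def_field] at h
  have he : (Real.log ∘ Real.Gamma) x = (Real.log ∘ Real.Gamma) (x-1) + Real.log (x-1) := by
    have := log_Gamma_rec hx1
    simpa using this
  have hp : psi x = deriv (Real.log ∘ Real.Gamma) x := rfl
  rw [hp]
  rw [he] at h
  have hs : x - (x-1) = 1 := by ring
  rw [hs] at h
  simpa using h

lemma psi_lt_log {x : ℝ} (hx : 0 < x) : psi x < Real.log x := by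
  have h1 := psi_le_log (by linarith : (0:ℝ) < x+1)
  have h2 := psi_rec hx
  have h3 : Real.log (x+1) - Real.log x < 1/x := by
    have hne : (x+1)/x ≠ 1 := by
      intro h
      rw [div_eq_one_iff_eq hx.ne'] at h
      linarith
    have := Real.log_lt_sub_one_of_pos (x := (x+1)/x) (by positivity) hne
    rw [Real.log_div (by positivity) hx.ne'] at this
    have he : (x+1)/x - 1 = 1/x := by field_simp; ring
    linarith [he ▸ this]
  linarith

lemma psi_eq {t : ℝ} (ht : 0 < t) : Real.log t - psi t = G t := by
  set D : ℝ → ℝ := fun x => psi x - Real.log x + G x with hD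
  have hstep : ∀ x, 0 < x → D (x+1) = D x := by
    intro x hx
    simp only [hD]
    have h1 := psi_rec hx
    have h2 := G_rec hx
    linarith
  have hshift : ∀ n : ℕ, D (t + n) = D t := by
    intro n; induction n with
    | zero => simp
    | succ n ih =>
      have he : t + ((n:ℕ)+1 : ℕ) = (t + n) + 1 := by push_cast; ring
      rw [he, hstep _ (lt_of_lt_of_le ht (le_add_of_nonneg_right (Nat.cast_nonneg n)))]
      exact ih
  have hbound : ∀ x : ℝ, 1 < x → |D x| ≤ (Real.log x - Real.log (x-1)) + 1/x := by
    intro x hx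
    have hx0 : (0:ℝ) < x := by linarith
    have h1 := psi_le_log hx0
    have h2 := log_le_psi hx
    have h3 := G_nonneg hx0
    have h4 := G_le hx0
    have h5 : Real.log (x-1) ≤ Real.log x := by
      apply Real.log_le_log (by linarith)
      linarith
    have h6 : (0:ℝ) ≤ 1/x := by positivity
    rw [abs_le]
    simp only [hD]
    constructor
    · linarith
    · linarith
  have hB : Tendsto (fun x : ℝ => (Real.log x - Real.log (x-1)) + 1/x) atTop (𝓝 0) := by
    have h1 : Tendsto (fun x : ℝ => 1/(x-1)) atTop (𝓝 0) := by
      have hc : Tendsto (fun x : ℝ => x - 1) atTop atTop :=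
        tendsto_atTop_add_const_right _ (-1) tendsto_id
      exact (tendsto_inv_atTop_zero.congr (fun x => (one_div x).symm)).comp hc
    have h2 : Tendsto (fun x : ℝ => 1 + 1/(x-1)) atTop (𝓝 1) := by
      simpa using tendsto_const_nhds.add h1
    have h3 : Tendsto (fun x : ℝ => Real.log (1 + 1/(x-1))) atTop (𝓝 0) := by
      have := (Real.continuousAt_log one_ne_zero).tendsto.comp h2
      simpa [Function.comp_def] using this
    have h4 : Tendsto (fun x : ℝ => Real.log x - Real.log (x-1)) atTop (𝓝 0) := by
      apply h3.congr'
      filter_upwards [eventually_gt_atTop 1] with x hx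
      have hne : x - 1 ≠ 0 := by intro h; rw [sub_eq_zero] at h; linarith
      rw [← Real.log_div (by positivity) hne]
      congr 1
      field_simp
      ring
    have h5 : Tendsto (fun x : ℝ => 1/x) atTop (𝓝 0) :=
      tendsto_inv_atTop_zero.congr (fun x => (one_div x).symm)
    simpa using h4.add h5
  have hcomp : Tendsto (fun n : ℕ => t + (n:ℝ)) atTop atTop :=
    tendsto_atTop_add_const_left _ t tendsto_natCast_atTop_atTop
  have hlim : Tendsto (fun n : ℕ => D (t + n)) atTop (𝓝 0) := by
    apply squeeze_zero_norm'
    · filter_upwards [hcomp.eventually (eventually_gt_atTop 1)] with n hn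
      exact hbound _ hn
    · exact hB.comp hcomp
  have hconst : Tendsto (fun n : ℕ => D (t + n)) atTop (𝓝 (D t)) := by
    exact tendsto_const_nhds.congr (fun n => (hshift n).symm)
  have h0 := tendsto_nhds_unique hconst hlim
  simp only [hD] at h0
  linarith

noncomputable def K (n : ℕ) (t : ℝ) : ℝ := ∫ s in Ioi (0:ℝ), s^n * Real.exp (-(t*s)) * phid s

lemma K_nonneg (n : ℕ) {t : ℝ} (_ht : 0 < t) : 0 ≤ K n t :=
  setIntegral_nonneg measurableSet_Ioi fun s hs => by
    have hs0 := mem_Ioi.1 hs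
    have := phid_nonneg hs0
    positivity

lemma hasDerivAt_K (n : ℕ) {t : ℝ} (ht : 0 < t) : HasDerivAt (K n) (-K (n+1) t) t := by
  have key := hasDerivAt_integral_of_dominated_loc_of_deriv_le (μ := volume.restrict (Ioi 0))
    (F := fun (x : ℝ) (s : ℝ) => s^n * Real.exp (-(x*s)) * phid s)
    (F' := fun (x : ℝ) (s : ℝ) => -(s^(n+1) * Real.exp (-(x*s)) * phid s))
    (x₀ := t) (s := Metric.ball t (t/2))
    (bound := fun s => (((n+1).factorial : ℝ) / (t/2)^(n+1)) * phid s)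
    (Metric.ball_mem_nhds t (by positivity)) ?_ (integrable_pow_exp_phid ht n) ?_ ?_
    (integrable_phid.const_mul _) ?_
  · have h2 : (∫ s in Ioi (0:ℝ), -(s^(n+1) * Real.exp (-(t*s)) * phid s)) = -K (n+1) t := by
      rw [integral_neg]; rfl
    rw [← h2]
    exact key.2
  · apply Eventually.of_forall
    intro x
    apply ContinuousOn.aestronglyMeasurable _ measurableSet_Ioi
    exact ((by fun_prop : Continuous fun s : ℝ => s^n * Real.exp (-(x*s))).continuousOn).mul contOn_phid
  · apply ContinuousOn.aestronglyMeasurable _ measurableSet_Ioi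
    exact (((by fun_prop : Continuous fun s : ℝ => s^(n+1) * Real.exp (-(t*s))).continuousOn).mul contOn_phid).neg
  · rw [ae_restrict_iff' measurableSet_Ioi]
    apply ae_of_all
    intro s hs x hx
    have hs0 := mem_Ioi.1 hs
    have hx2 := ball_pos ht hx
    have hd := phid_nonneg hs0
    have hb := pow_mul_exp_le (by positivity : (0:ℝ) < t/2) hs0.le (n+1)
    have h2 : Real.exp (-(x*s)) ≤ Real.exp (-(t/2*s)) := by
      apply Real.exp_le_exp.2; nlinarith
    rw [norm_neg, Real.norm_eq_abs, abs_of_nonneg (by positivity)]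
    have h3 : s^(n+1) * Real.exp (-(x*s)) ≤ ((n+1).factorial : ℝ) / (t/2)^(n+1) := by
      calc s^(n+1) * Real.exp (-(x*s)) ≤ s^(n+1) * Real.exp (-(t/2*s)) := by
            apply mul_le_mul_of_nonneg_left h2 (by positivity)
        _ ≤ ((n+1).factorial : ℝ) / (t/2)^(n+1) := hb
    nlinarith [pow_nonneg hs0.le (n+1), Real.exp_pos (-(x*s))]
  · rw [ae_restrict_iff' measurableSet_Ioi]
    apply ae_of_all
    intro s hs x hx
    have hs0 := mem_Ioi.1 hs
    have h1 : HasDerivAt (fun x : ℝ => Real.exp (-(x*s))) (Real.exp (-(x*s)) * (-s)) x := by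
      apply (Real.hasDerivAt_exp _).comp
      simpa using ((hasDerivAt_id x).mul_const s).fun_neg
    have h2 := (h1.const_mul (s^n)).mul_const (phid s)
    refine h2.congr_deriv ?_
    ring

lemma tendsto_exp_c_atTop {c : ℝ} (hc : 0 < c) :
    Tendsto (fun s : ℝ => Real.exp (-(c*s))) atTop (𝓝 0) := by
  apply Real.tendsto_exp_atBot.comp
  apply tendsto_neg_atBot_iff.2
  exact (tendsto_const_mul_atTop_of_pos hc).2 tendsto_id

lemma phiT_cwa : ContinuousWithinAt phiT (Ici 0) 0 := by
  rw [← continuousWithinAt_Ioi_iff_Ici]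
  have h0 : phiT 0 = 1/2 := by simp [phiT]
  unfold ContinuousWithinAt
  rw [h0]
  apply tendsto_phi_zero.congr'
  filter_upwards [self_mem_nhdsWithin] with s hs using (phiT_eq_phi hs).symm

lemma phiT_nonneg (s : ℝ) : 0 ≤ phiT s := by
  by_cases h : s ≤ 0
  · simp [phiT, h]
  · rw [phiT_eq_phi (not_le.1 h)]; exact phi_nonneg (not_le.1 h)

lemma phiT_le_one (s : ℝ) : phiT s ≤ 1 := by
  by_cases h : s ≤ 0
  · simp [phiT, h]; norm_num
  · rw [phiT_eq_phi (not_le.1 h)]; exact phi_le_one (not_le.1 h)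

lemma tG_eq {t : ℝ} (ht : 0 < t) : t * G t = 1/2 + K 0 t := by
  have hint1 : IntegrableOn (fun s : ℝ => Real.exp (-(t*s)) * phid s) (Ioi 0) := by
    apply IntegrableOn.congr_fun (integrable_pow_exp_phid ht 0) _ measurableSet_Ioi
    intro s _; simp
  have hint2 : IntegrableOn (fun s : ℝ => t * (Real.exp (-(t*s)) * phiT s)) (Ioi 0) := by
    apply IntegrableOn.congr_fun ((integrable_exp_phi ht).const_mul t) _ measurableSet_Ioi
    intro s hs
    simp only
    rw [phiT_eq_phi (mem_Ioi.1 hs)]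
  have h := integral_Ioi_of_hasDerivAt_of_tendsto (a := 0) (m := 0)
    (f := fun s => Real.exp (-(t*s)) * phiT s)
    (f' := fun s => Real.exp (-(t*s)) * phid s - t * (Real.exp (-(t*s)) * phiT s))
    ?_ ?_ (hint1.sub hint2) ?_
  · have hval : Real.exp (-(t*0)) * phiT 0 = 1/2 := by
      simp [phiT]
    rw [hval, integral_sub hint1 hint2, MeasureTheory.integral_const_mul] at h
    have hG : ∫ s in Ioi (0:ℝ), Real.exp (-(t*s)) * phiT s = G t := by
      apply setIntegral_congr_fun measurableSet_Ioi
      intro s hs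
      simp only
      rw [phiT_eq_phi (mem_Ioi.1 hs)]
    have hK : ∫ s in Ioi (0:ℝ), Real.exp (-(t*s)) * phid s = K 0 t := by
      apply setIntegral_congr_fun measurableSet_Ioi
      intro s _
      simp [K]
    rw [hG, hK] at h
    linarith
  · exact ((by fun_prop : Continuous fun s : ℝ => Real.exp (-(t*s))).continuousWithinAt).mul phiT_cwa
  · intro x hx
    have hx0 := mem_Ioi.1 hx
    have h1 : HasDerivAt (fun s : ℝ => Real.exp (-(t*s))) (Real.exp (-(t*x)) * (-t)) x := by
      apply (Real.hasDerivAt_exp _).comp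
      simpa using ((hasDerivAt_id x).const_mul t).fun_neg
    have h2 := h1.mul (hasDerivAt_phiT hx0)
    refine h2.congr_deriv ?_
    ring
  · apply squeeze_zero_norm' (a := fun s : ℝ => Real.exp (-(t*s)))
    · filter_upwards [eventually_gt_atTop 0] with s hs
      rw [Real.norm_eq_abs, abs_of_nonneg (mul_nonneg (Real.exp_pos _).le (phiT_nonneg s))]
      nlinarith [phiT_le_one s, phiT_nonneg s, Real.exp_pos (-(t*s))]
    · exact tendsto_exp_c_atTop ht

lemma contDiffOn_K (m : ℕ) : ∀ n : ℕ, ContDiffOn ℝ m (K n) (Ioi 0) := by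
  induction m with
  | zero =>
    intro n
    rw [Nat.cast_zero, contDiffOn_zero]
    intro x hx
    exact (hasDerivAt_K n (mem_Ioi.1 hx)).continuousAt.continuousWithinAt
  | succ m ih =>
    intro n
    rw [Nat.cast_add_one, contDiffOn_succ_iff_deriv_of_isOpen isOpen_Ioi]
    refine ⟨fun x hx => (hasDerivAt_K n (mem_Ioi.1 hx)).differentiableAt.differentiableWithinAt,
      ?_, ?_⟩
    · intro h; exact absurd h (by simp)
    · apply ContDiffOn.congr ((ih (n+1)).neg)
      intro x hx
      exact (hasDerivAt_K n (mem_Ioi.1 hx)).deriv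

lemma iteratedDeriv_K0 : ∀ n : ℕ, ∀ t : ℝ, 0 < t →
    iteratedDeriv n (K 0) t = (-1)^n * K n t := by
  intro n
  induction n with
  | zero => intro t _; simp
  | succ n ih =>
    intro t ht
    rw [iteratedDeriv_succ]
    have heq : iteratedDeriv n (K 0) =ᶠ[𝓝 t] (fun x => (-1)^n * K n x) := by
      filter_upwards [isOpen_Ioi.mem_nhds (mem_Ioi.2 ht)] with x hx using ih x (mem_Ioi.1 hx)
    rw [heq.deriv_eq, deriv_const_mul _ (hasDerivAt_K n ht).differentiableAt,
      (hasDerivAt_K n ht).deriv]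
    ring

def IsCM (f : ℝ → ℝ) : Prop :=
  (∀ m : ℕ, ContDiffOn ℝ m f (Ioi 0)) ∧
    ∀ n : ℕ, ∀ t : ℝ, 0 < t → 0 ≤ (-1:ℝ)^n * iteratedDeriv n f t

lemma itD_open {s : Set ℝ} (hs : IsOpen s) {x : ℝ} (hx : x ∈ s) (f : ℝ → ℝ) (n : ℕ) :
    iteratedDerivWithin n f s x = iteratedDeriv n f x := by
  rw [iteratedDerivWithin_eq_iteratedFDerivWithin, iteratedDeriv_eq_iteratedFDeriv,
    iteratedFDerivWithin_of_isOpen n hs hx]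

lemma iteratedDeriv_add_on {n : ℕ} {f g : ℝ → ℝ}
    (hf : ContDiffOn ℝ n f (Ioi 0)) (hg : ContDiffOn ℝ n g (Ioi 0)) {t : ℝ} (ht : 0 < t) :
    iteratedDeriv n (fun x => f x + g x) t = iteratedDeriv n f t + iteratedDeriv n g t := by
  have h1 := iteratedDerivWithin_add (mem_Ioi.2 ht) isOpen_Ioi.uniqueDiffOn (hf t (mem_Ioi.2 ht)) (hg t (mem_Ioi.2 ht))
  rw [itD_open isOpen_Ioi (mem_Ioi.2 ht), itD_open isOpen_Ioi (mem_Ioi.2 ht),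
    itD_open isOpen_Ioi (mem_Ioi.2 ht)] at h1
  exact h1

lemma IsCM.diffAt {f : ℝ → ℝ} (hf : IsCM f) {t : ℝ} (ht : 0 < t) :
    DifferentiableAt ℝ f t := by
  have h := (hf.1 1).differentiableOn (by norm_num)
  exact h.differentiableAt (isOpen_Ioi.mem_nhds (mem_Ioi.2 ht))

lemma IsCM.derivCD {f : ℝ → ℝ} (hf : IsCM f) (m : ℕ) :
    ContDiffOn ℝ m (deriv f) (Ioi 0) := by
  have h := hf.1 (m+1)
  rw [Nat.cast_add_one, contDiffOn_succ_iff_deriv_of_isOpen isOpen_Ioi] at h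
  exact h.2.2

lemma IsCM.negDeriv {f : ℝ → ℝ} (hf : IsCM f) : IsCM (fun x => -deriv f x) := by
  constructor
  · exact fun m => (hf.derivCD m).neg
  · intro m x hx
    rw [iteratedDeriv_fun_neg, ← iteratedDeriv_succ']
    have h := hf.2 (m+1) x hx
    have he : (-1:ℝ)^m * -(iteratedDeriv (m+1) f x) = (-1)^(m+1) * iteratedDeriv (m+1) f x := by
      rw [pow_succ]; ring
    rw [he]
    exact h

lemma IsCM.add {f g : ℝ → ℝ} (hf : IsCM f) (hg : IsCM g) : IsCM (fun x => f x + g x) := by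
  constructor
  · exact fun m => (hf.1 m).add (hg.1 m)
  · intro n t ht
    rw [iteratedDeriv_add_on (hf.1 n) (hg.1 n) ht, mul_add]
    exact add_nonneg (hf.2 n t ht) (hg.2 n t ht)

lemma isCM_mul_sign : ∀ (n : ℕ) (f g : ℝ → ℝ), IsCM f → IsCM g →
    ∀ t : ℝ, 0 < t → 0 ≤ (-1:ℝ)^n * iteratedDeriv n (fun x => f x * g x) t := by
  intro n
  induction n with
  | zero =>
    intro f g hf hg t ht
    have h1 := hf.2 0 t ht
    have h2 := hg.2 0 t ht
    simp only [iteratedDeriv_zero, pow_zero, one_mul] at *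
    exact mul_nonneg h1 h2
  | succ n ih =>
    intro f g hf hg t ht
    rw [iteratedDeriv_succ']
    have heq : Set.EqOn (deriv (fun x => f x * g x))
        (fun x => -(-deriv f x * g x + f x * -deriv g x)) (Ioi 0) := by
      intro x hx
      rw [deriv_fun_mul (hf.diffAt (mem_Ioi.1 hx)) (hg.diffAt (mem_Ioi.1 hx))]
      ring
    rw [(heq.iteratedDeriv_of_isOpen isOpen_Ioi n) (mem_Ioi.2 ht), iteratedDeriv_fun_neg,
      iteratedDeriv_add_on (f := fun x => -deriv f x * g x) (g := fun x => f x * -deriv g x)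
        (((hf.derivCD n).neg).mul (hg.1 n)) ((hf.1 n).mul ((hg.derivCD n).neg)) ht]
    have hu : 0 ≤ (-1:ℝ)^n * iteratedDeriv n (fun x => -deriv f x * g x) t :=
      ih _ _ hf.negDeriv hg t ht
    have hv : 0 ≤ (-1:ℝ)^n * iteratedDeriv n (fun x => f x * -deriv g x) t := by
      have := ih _ _ hg.negDeriv hf t ht
      have hcomm : (fun x => -deriv g x * f x) = (fun x => f x * -deriv g x) := by
        ext x; ring
      rwa [hcomm] at this
    have he : (-1:ℝ)^(n+1) * -(iteratedDeriv n (fun x => -deriv f x * g x) t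
          + iteratedDeriv n (fun x => f x * -deriv g x) t)
        = (-1:ℝ)^n * iteratedDeriv n (fun x => -deriv f x * g x) t
          + (-1:ℝ)^n * iteratedDeriv n (fun x => f x * -deriv g x) t := by
      rw [pow_succ]; ring
    rw [he]
    exact add_nonneg hu hv

lemma IsCM.mul {f g : ℝ → ℝ} (hf : IsCM f) (hg : IsCM g) : IsCM (fun x => f x * g x) :=
  ⟨fun m => (hf.1 m).mul (hg.1 m), fun n t ht => isCM_mul_sign n f g hf hg t ht⟩

lemma iteratedDeriv_const' (n : ℕ) (c : ℝ) :
    iteratedDeriv n (fun _ : ℝ => c) = fun _ => if n = 0 then c else 0 := by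
  induction n with
  | zero => simp
  | succ n ih =>
    rw [iteratedDeriv_succ, ih]
    ext x
    by_cases hn : n = 0 <;> simp [hn]

lemma isCM_const {c : ℝ} (hc : 0 ≤ c) : IsCM (fun _ : ℝ => c) := by
  constructor
  · exact fun m => contDiffOn_const
  · intro n t _
    rw [iteratedDeriv_const']
    by_cases hn : n = 0 <;> simp [hn, hc]

lemma isCM_K0 : IsCM (K 0) := by
  constructor
  · exact fun m => contDiffOn_K m 0
  · intro n t ht
    rw [iteratedDeriv_K0 n t ht, ← mul_assoc, ← mul_pow]
    norm_num
    exact K_nonneg n ht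

lemma isCM_rpow {β : ℝ} (hβ : β ≤ 0) : IsCM (fun t : ℝ => t ^ β) := by
  have hformula : ∀ n : ℕ, Set.EqOn (iteratedDeriv n (fun t : ℝ => t ^ β))
      (fun t => (∏ i ∈ Finset.range n, (β - i)) * t ^ (β - n)) (Ioi 0) := by
    intro n
    induction n with
    | zero => intro x hx; simp
    | succ n ih =>
      intro x hx
      have hx0 := mem_Ioi.1 hx
      rw [iteratedDeriv_succ]
      have heq : iteratedDeriv n (fun t : ℝ => t ^ β)
          =ᶠ[𝓝 x] fun t => (∏ i ∈ Finset.range n, (β - i)) * t ^ (β - n) := by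
        filter_upwards [isOpen_Ioi.mem_nhds hx] with y hy using ih hy
      rw [heq.deriv_eq]
      have hd : HasDerivAt (fun t : ℝ => (∏ i ∈ Finset.range n, (β - i)) * t ^ (β - n))
          ((∏ i ∈ Finset.range n, (β - i)) * ((β - n) * x ^ (β - n - 1))) x :=
        (Real.hasDerivAt_rpow_const (Or.inl hx0.ne')).const_mul _
      rw [hd.deriv, Finset.prod_range_succ]
      rw [show β - (n+1 : ℕ) = β - n - 1 by push_cast; ring]
      ring
  have hsign : ∀ n : ℕ, 0 ≤ (-1:ℝ)^n * ∏ i ∈ Finset.range n, (β - i) := by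
    intro n
    induction n with
    | zero => simp
    | succ n ih =>
      rw [Finset.prod_range_succ]
      have h2 : (0:ℝ) ≤ (n:ℝ) - β := by
        have := Nat.cast_nonneg (α := ℝ) n
        linarith
      have he : (-1:ℝ)^(n+1) * ((∏ i ∈ Finset.range n, (β - i)) * (β - n))
          = ((-1:ℝ)^n * ∏ i ∈ Finset.range n, (β - i)) * ((n:ℝ) - β) := by
        rw [pow_succ]; ring
      rw [he]
      exact mul_nonneg ih h2
  constructor
  · intro m x hx
    exact (Real.contDiffAt_rpow_const_of_ne (ne_of_gt (mem_Ioi.1 hx))).contDiffWithinAt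
  · intro n t ht
    rw [hformula n (mem_Ioi.2 ht),
      show (-1:ℝ)^n * ((∏ i ∈ Finset.range n, (β - i)) * t ^ (β - n))
        = ((-1:ℝ)^n * ∏ i ∈ Finset.range n, (β - i)) * t ^ (β - n) by ring]
    exact mul_nonneg (hsign n) (Real.rpow_pos_of_pos ht _).le

def CompletelyMonotonicOn (h : ℝ → ℝ) : Prop :=
  ∀ (n : ℕ), ∀ t : ℝ, 0 < t → 0 ≤ (-1 : ℝ) ^ n * iteratedDeriv n h t

lemma h_eq (α : ℝ) : ∀ x ∈ Ioi (0:ℝ),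
    x ^ α * (Real.log x - psi x) = x ^ (α - 1) * (1/2 + K 0 x) := by
  intro x hx
  have hx0 := mem_Ioi.1 hx
  rw [psi_eq hx0, ← tG_eq hx0, show α = (α - 1) + 1 by ring, Real.rpow_add_one hx0.ne']
  ring

lemma isCM_H (α : ℝ) (hα : α ≤ 1) : IsCM (fun t : ℝ => t ^ (α-1) * (1/2 + K 0 t)) :=
  IsCM.mul (isCM_rpow (by linarith)) ((isCM_const (by norm_num)).add isCM_K0)

lemma Hsmooth (α : ℝ) (m : ℕ) :
    ContDiffOn ℝ m (fun t : ℝ => t ^ (α-1) * (1/2 + K 0 t)) (Ioi 0) := by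
  apply ContDiffOn.mul
  · intro x hx
    exact (Real.contDiffAt_rpow_const_of_ne (ne_of_gt (mem_Ioi.1 hx))).contDiffWithinAt
  · exact (contDiffOn_const (c := (1/2:ℝ))).add (contDiffOn_K m 0)

theorem stmt0 :
    (∀ t : ℝ, 0 < t → 0 < Real.log t - psi t) ∧
    (∀ α : ℝ,
      CompletelyMonotonicOn (fun t => t ^ α * (Real.log t - psi t)) ↔ α ≤ 1) := by
  constructor
  · intro t ht
    linarith [psi_lt_log ht]
  · intro α
    constructor
    · intro hCM
      by_contra hα
      push_neg at hα
      set h : ℝ → ℝ := fun t => t ^ α * (Real.log t - psi t) with hh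
      set H : ℝ → ℝ := fun t => t ^ (α-1) * (1/2 + K 0 t) with hH
      have hEq : Set.EqOn h H (Ioi 0) := fun x hx => h_eq α x hx
      have h1nn : 0 ≤ h 1 := by simpa using hCM 0 1 one_pos
      have hanti : AntitoneOn h (Ioi 0) := by
        apply antitoneOn_of_deriv_nonpos (convex_Ioi 0)
        · exact ContinuousOn.congr ((Hsmooth α 0).continuousOn) hEq
        · rw [interior_Ioi]
          intro x hx
          have hev : h =ᶠ[𝓝 x] H := by
            filter_upwards [isOpen_Ioi.mem_nhds hx] with y hy using hEq hy
          have hHd : DifferentiableAt ℝ H x :=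
            (((Hsmooth α 1).differentiableOn (by norm_num)).differentiableAt
              (isOpen_Ioi.mem_nhds hx))
          exact (hev.differentiableAt_iff.2 hHd).differentiableWithinAt
        · rw [interior_Ioi]
          intro x hx
          have := hCM 1 x (mem_Ioi.1 hx)
          rw [iteratedDeriv_one] at this
          simp only [pow_one] at this
          linarith
      set T : ℝ := max 2 ((2 * h 1 + 2) ^ (α - 1)⁻¹) with hT
      have hT2 : (2:ℝ) ≤ T := le_max_left _ _
      have hTb : (2 * h 1 + 2) ^ (α - 1)⁻¹ ≤ T := le_max_right _ _
      have hT0 : (0:ℝ) < T := by linarith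
      have hle : h T ≤ h 1 := hanti (mem_Ioi.2 one_pos) (mem_Ioi.2 hT0) (by linarith)
      have hval : h T = T ^ (α-1) * (1/2 + K 0 T) := hEq (mem_Ioi.2 hT0)
      have hK := K_nonneg 0 hT0
      have hbase : (0:ℝ) ≤ 2 * h 1 + 2 := by linarith
      have hTpow : 2 * h 1 + 2 ≤ T ^ (α-1) := by
        calc 2 * h 1 + 2 = ((2 * h 1 + 2) ^ (α-1)⁻¹) ^ (α-1) := by
              rw [← Real.rpow_mul hbase, inv_mul_cancel₀ (by linarith : α - 1 ≠ 0),
                Real.rpow_one]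
          _ ≤ T ^ (α-1) := Real.rpow_le_rpow (Real.rpow_nonneg hbase _) hTb (by linarith)
      have hfin : (2 * h 1 + 2) * (1/2) ≤ T ^ (α-1) * (1/2 + K 0 T) :=
        mul_le_mul hTpow (by linarith) (by norm_num) (by linarith)
      rw [← hval] at hfin
      linarith
    · intro hα n t ht
      have hcm := isCM_H α hα
      have hev : (fun t : ℝ => t ^ α * (Real.log t - psi t))
          =ᶠ[𝓝 t] (fun t : ℝ => t ^ (α-1) * (1/2 + K 0 t)) := by
        filter_upwards [isOpen_Ioi.mem_nhds (mem_Ioi.2 ht)] with x hx using h_eq α x hx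
      rw [Filter.EventuallyEq.iteratedDeriv_eq n hev]
      exact hcm.2 n t ht
end

section
/- Binet's first formula: for t > 0, ln Γ(t) = (t - 1/2) ln t - t + (1/2) ln(2π) + ∫₀^∞ (1/(e^u - 1) - 1/u + 1/2) · e^{-tu}/u du. -/
open Real Set MeasureTheory Filter Topology

/-- If `g 0 = 0` and `g` has nonnegative derivative on `[0,∞)`, then `g ≥ 0` there. -/
lemma binet_aux_nonneg {g g' : ℝ → ℝ} (hd : ∀ x, 0 ≤ x → HasDerivAt g (g' x) x)
    (h0 : g 0 = 0) (hg' : ∀ x, 0 ≤ x → 0 ≤ g' x) : ∀ u, 0 ≤ u → 0 ≤ g u := by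
  intro u hu
  have hmono : MonotoneOn g (Ici (0:ℝ)) := by
    apply monotoneOn_of_deriv_nonneg (convex_Ici 0)
    · exact fun x hx => (hd x hx).continuousAt.continuousWithinAt
    · intro x hx
      rw [interior_Ici] at hx
      exact ((hd x hx.le).differentiableAt.differentiableWithinAt)
    · intro x hx
      rw [interior_Ici] at hx
      rw [(hd x hx.le).deriv]
      exact hg' x hx.le
  have := hmono self_mem_Ici (hu : u ∈ Ici 0) hu
  linarith [h0 ▸ this]

noncomputable def binetF (u : ℝ) : ℝ := 1 / (Real.exp u - 1) - 1 / u + 1 / 2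

lemma binet_q_nonneg : ∀ u : ℝ, 0 ≤ u → 0 ≤ 2 * u - (Real.exp u - 1) * (2 - u) := by
  apply binet_aux_nonneg (g' := fun u => 1 - Real.exp u * (1 - u))
  · intro x _
    have h2 : HasDerivAt (fun u : ℝ => (Real.exp u - 1) * (2 - u))
        (Real.exp x * (2 - x) + (Real.exp x - 1) * (0 - 1)) x :=
      ((Real.hasDerivAt_exp x).sub_const 1).mul ((hasDerivAt_const x 2).sub (hasDerivAt_id' x))
    have h1 : HasDerivAt (fun u : ℝ => 2 * u) (2 * 1) x := (hasDerivAt_id' x).const_mul 2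
    refine (h1.fun_sub h2).congr_deriv ?_
    ring
  · simp
  · apply binet_aux_nonneg (g' := fun u => u * Real.exp u)
    · intro x _
      have h2 : HasDerivAt (fun u : ℝ => Real.exp u * (1 - u))
          (Real.exp x * (1 - x) + Real.exp x * (0 - 1)) x :=
        (Real.hasDerivAt_exp x).mul ((hasDerivAt_const x 1).sub (hasDerivAt_id' x))
      refine ((hasDerivAt_const x 1).fun_sub h2).congr_deriv ?_
      ring
    · simp
    · intro x hx
      positivity

lemma binet_p_nonneg : ∀ u : ℝ, 0 ≤ u → 0 ≤ (Real.exp u - 1) * (u ^ 2 - 2 * u + 4) - 4 * u := by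
  apply binet_aux_nonneg (g' := fun u => Real.exp u * (u ^ 2 + 2) - (2 * u + 2))
  · intro x _
    have hpoly : HasDerivAt (fun u : ℝ => u ^ 2 - 2 * u + 4) (2 * x - 2 * 1) x := by
      simpa using ((hasDerivAt_pow 2 x).sub ((hasDerivAt_id' x).const_mul 2)).add_const 4
    have h2 : HasDerivAt (fun u : ℝ => (Real.exp u - 1) * (u ^ 2 - 2 * u + 4))
        (Real.exp x * (x ^ 2 - 2 * x + 4) + (Real.exp x - 1) * (2 * x - 2 * 1)) x :=
      ((Real.hasDerivAt_exp x).sub_const 1).mul hpoly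
    have h1 : HasDerivAt (fun u : ℝ => 4 * u) (4 * 1) x := (hasDerivAt_id' x).const_mul 4
    refine (h2.fun_sub h1).congr_deriv ?_
    ring
  · simp
  · intro x hx
    nlinarith [Real.add_one_le_exp x, sq_nonneg x, Real.exp_pos x]

lemma exp_sub_one_pos' {u : ℝ} (hu : 0 < u) : 0 < Real.exp u - 1 := by
  simpa using Real.exp_lt_exp.mpr hu

lemma binetF_nonneg {u : ℝ} (hu : 0 < u) : 0 ≤ binetF u := by
  have hE := exp_sub_one_pos' hu
  have key := binet_q_nonneg u hu.le
  have h : binetF u = (2 * u - (Real.exp u - 1) * (2 - u)) / (2 * u * (Real.exp u - 1)) := by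
    unfold binetF
    field_simp
    ring
  rw [h]
  positivity

lemma binetF_le {u : ℝ} (hu : 0 < u) : binetF u ≤ u / 4 := by
  have hE := exp_sub_one_pos' hu
  have key := binet_p_nonneg u hu.le
  have h : u / 4 - binetF u
      = ((Real.exp u - 1) * (u ^ 2 - 2 * u + 4) - 4 * u) / (4 * u * (Real.exp u - 1)) := by
    unfold binetF
    field_simp
    ring
  nlinarith [div_nonneg key (by positivity : (0:ℝ) ≤ 4 * u * (Real.exp u - 1))]

lemma binetF_continuousOn : ContinuousOn binetF (Ioi (0:ℝ)) := by
  unfold binetF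
  apply ContinuousOn.add
  apply ContinuousOn.sub
  · exact continuousOn_const.div (Real.continuous_exp.continuousOn.sub continuousOn_const)
      (fun x hx => (exp_sub_one_pos' hx).ne')
  · exact continuousOn_const.div continuousOn_id (fun x hx => (ne_of_gt hx))
  · exact continuousOn_const

lemma binetF_le_half {u : ℝ} (hu : 0 < u) : binetF u ≤ 1 / 2 := by
  have hE := exp_sub_one_pos' hu
  have hlt : u < Real.exp u - 1 := by
    have := Real.add_one_lt_exp hu.ne'
    linarith
  have : 1 / (Real.exp u - 1) ≤ 1 / u := by
    apply one_div_le_one_div_of_le hu hlt.le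
  unfold binetF
  linarith

lemma binet_integrable_aux {f : ℝ → ℝ} (hf : ContinuousOn f (Ioi 0)) {c b : ℝ} (hb : 0 < b)
    (hbound : ∀ u ∈ Ioi (0:ℝ), |f u| ≤ c * Real.exp (-b * u)) :
    IntegrableOn f (Ioi (0:ℝ)) := by
  apply Integrable.mono' ((exp_neg_integrableOn_Ioi 0 hb).const_mul c)
    (hf.aestronglyMeasurable measurableSet_Ioi)
  rw [ae_restrict_iff' measurableSet_Ioi]
  filter_upwards with u hu
  simpa using hbound u hu

lemma binet_integrand_integrable {t : ℝ} (ht : 0 < t) :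
    IntegrableOn (fun u => binetF u * Real.exp (-t * u) / u) (Ioi (0:ℝ)) := by
  apply binet_integrable_aux (c := 1/4) (b := t) _ ht
  · intro u hu
    have hu : (0:ℝ) < u := hu
    have h1 := binetF_nonneg hu
    have h2 := binetF_le hu
    rw [abs_of_nonneg (by positivity)]
    rw [div_le_iff₀ hu]
    have : Real.exp (-t*u) > 0 := Real.exp_pos _
    nlinarith
  · exact ((binetF_continuousOn.mul (Real.continuous_exp.comp
      (continuous_const.mul continuous_id)).continuousOn).div continuousOn_id
      (fun x hx => ne_of_gt hx))

noncomputable def binetμ (t : ℝ) : ℝ := ∫ u in Ioi (0:ℝ), binetF u * Real.exp (-t * u) / u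

lemma integral_exp_neg_mul_Ioi_zero {t : ℝ} (ht : 0 < t) :
    ∫ u in Ioi (0:ℝ), Real.exp (-t * u) = 1 / t := by
  have h := integral_comp_mul_left_Ioi (fun x => Real.exp (-x)) 0 ht
  simp only [mul_zero, integral_exp_neg_Ioi, neg_zero, Real.exp_zero, smul_eq_mul, mul_one] at h
  simp only [neg_mul]
  rw [h, one_div]

lemma binetμ_nonneg {t : ℝ} (ht : 0 < t) : 0 ≤ binetμ t := by
  apply setIntegral_nonneg measurableSet_Ioi
  intro u hu
  have hu : (0:ℝ) < u := hu
  have := binetF_nonneg hu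
  positivity

lemma binetμ_le {t : ℝ} (ht : 0 < t) : binetμ t ≤ 1 / (4 * t) := by
  have h1 : binetμ t ≤ ∫ u in Ioi (0:ℝ), (1/4) * Real.exp (-t * u) := by
    apply setIntegral_mono_on (binet_integrand_integrable ht)
      (((exp_neg_integrableOn_Ioi 0 ht).const_mul (1/4))) measurableSet_Ioi
    intro u hu
    have hu : (0:ℝ) < u := hu
    have h2 := binetF_le hu
    have h1 := binetF_nonneg hu
    rw [div_le_iff₀ hu]
    have : Real.exp (-t*u) > 0 := Real.exp_pos _
    nlinarith
  rw [integral_const_mul, integral_exp_neg_mul_Ioi_zero ht] at h1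
  calc binetμ t ≤ 1/4 * (1/t) := h1
  _ = 1/(4*t) := by field_simp

/-- constancy on `Ioi 0` from vanishing derivative -/
lemma binet_const_of_deriv_zero {f : ℝ → ℝ} (h : ∀ x ∈ Ioi (0:ℝ), HasDerivAt f 0 x)
    {x y : ℝ} (hx : 0 < x) (hy : 0 < y) : f x = f y := by
  apply (convex_Ioi (0:ℝ)).is_const_of_fderivWithin_eq_zero
    (fun z hz => ((h z hz).differentiableAt.differentiableWithinAt)) _ hx hy
  intro z hz
  rw [fderivWithin_of_isOpen isOpen_Ioi hz]
  have := (h z hz).hasFDerivAt.fderiv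
  rw [this]
  ext w
  simp

lemma abs_exp_neg_sub_exp_neg_le {x y : ℝ} (hx : 0 ≤ x) (hy : 0 ≤ y) :
    |Real.exp (-x) - Real.exp (-y)| ≤ |x - y| := by
  wlog hxy : x ≤ y generalizing x y
  · rw [abs_sub_comm, abs_sub_comm x y]
    exact this hy hx (le_of_not_ge hxy)
  have h1 : Real.exp (-y) ≤ Real.exp (-x) := Real.exp_le_exp.mpr (by linarith)
  rw [abs_of_nonneg (by linarith), abs_of_nonpos (by linarith)]
  have h2 : Real.exp (-x) - Real.exp (-y) = Real.exp (-x) * (1 - Real.exp (-(y - x))) := by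
    rw [mul_sub, mul_one, ← Real.exp_add]
    ring_nf
  rw [h2]
  have h3 : 1 - Real.exp (-(y - x)) ≤ y - x := by
    have := Real.add_one_le_exp (-(y - x))
    linarith
  have h4 : Real.exp (-x) ≤ 1 := Real.exp_le_one_iff.mpr (by linarith)
  have h5 : 0 ≤ 1 - Real.exp (-(y-x)) := by
    have : Real.exp (-(y-x)) ≤ 1 := Real.exp_le_one_iff.mpr (by linarith)
    linarith
  nlinarith

/-- the key pointwise bound for the Frullani integrand -/
lemma frullani_ptbound {a b u : ℝ} (ha : 0 < a) (hb : 0 < b) (hu : 0 < u) :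
    |(Real.exp (-a * u) - Real.exp (-b * u)) / u| ≤ |a - b| * Real.exp (-(min a b) * u) := by
  set c := min a b with hc
  have hac : 0 ≤ a - c := sub_nonneg.mpr (min_le_left a b)
  have hbc : 0 ≤ b - c := sub_nonneg.mpr (min_le_right a b)
  have key : Real.exp (-a*u) - Real.exp (-b*u)
      = Real.exp (-c*u) * (Real.exp (-((a-c)*u)) - Real.exp (-((b-c)*u))) := by
    rw [mul_sub, ← Real.exp_add, ← Real.exp_add]
    ring_nf
  have hbd := abs_exp_neg_sub_exp_neg_le (mul_nonneg hac hu.le) (mul_nonneg hbc hu.le)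
  have habs : |(a-c)*u - (b-c)*u| = |a - b| * u := by
    rw [show (a-c)*u - (b-c)*u = (a-b)*u by ring, abs_mul, abs_of_nonneg hu.le]
  rw [abs_div, key, abs_mul, abs_of_nonneg hu.le, abs_of_nonneg (Real.exp_pos _).le,
    div_le_iff₀ hu]
  calc Real.exp (-c*u) * |Real.exp (-((a-c)*u)) - Real.exp (-((b-c)*u))|
      ≤ Real.exp (-c*u) * (|a - b| * u) := by
        apply mul_le_mul_of_nonneg_left _ (Real.exp_pos _).le
        rw [← habs]
        exact hbd
    _ = |a - b| * Real.exp (-c*u) * u := by ring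

lemma frullani_integrable {a b : ℝ} (ha : 0 < a) (hb : 0 < b) :
    IntegrableOn (fun u => (Real.exp (-a * u) - Real.exp (-b * u)) / u) (Ioi (0:ℝ)) := by
  apply binet_integrable_aux (c := |a - b|) (b := min a b) _ (lt_min ha hb)
  · exact fun u hu => frullani_ptbound ha hb hu
  · apply ContinuousOn.div _ continuousOn_id (fun x hx => ne_of_gt hx)
    exact ((Real.continuous_exp.comp (continuous_const.mul continuous_id)).sub
      (Real.continuous_exp.comp (continuous_const.mul continuous_id))).continuousOn

lemma frullani_hasDerivAt {a : ℝ} (ha : 0 < a) {b₀ : ℝ} (hb₀ : 0 < b₀) :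
    HasDerivAt (fun b => ∫ u in Ioi (0:ℝ), (Real.exp (-a * u) - Real.exp (-b * u)) / u)
      (1 / b₀) b₀ := by
  have key := hasDerivAt_integral_of_dominated_loc_of_deriv_le
    (F := fun b u => (Real.exp (-a * u) - Real.exp (-b * u)) / u)
    (F' := fun b u => Real.exp (-b * u))
    (x₀ := b₀) (s := Metric.ball b₀ (b₀/2)) (μ := volume.restrict (Ioi 0))
    (bound := fun u => Real.exp (-(b₀/2) * u)) (Metric.ball_mem_nhds _ (by positivity))
    ?_ ?_ ?_ ?_ ?_ ?_
  · have := key.2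
    rwa [integral_exp_neg_mul_Ioi_zero hb₀] at this
  · filter_upwards with b
    by_cases hb : 0 < b
    · exact (frullani_integrable ha hb).aestronglyMeasurable
    · apply ContinuousOn.aestronglyMeasurable _ measurableSet_Ioi
      apply ContinuousOn.div _ continuousOn_id (fun x hx => ne_of_gt hx)
      exact ((Real.continuous_exp.comp (continuous_const.mul continuous_id)).sub
        (Real.continuous_exp.comp (continuous_const.mul continuous_id))).continuousOn
  · exact frullani_integrable ha hb₀
  · exact (Real.continuous_exp.comp (continuous_const.mul continuous_id)).aestronglyMeasurable
  · rw [ae_restrict_iff' measurableSet_Ioi]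
    filter_upwards with u hu
    intro b hball
    have hu : (0:ℝ) < u := hu
    have hb : b₀/2 ≤ b := by
      have := abs_lt.mp (mem_ball_iff_norm.mp hball)
      linarith [this.1]
    rw [Real.norm_eq_abs, abs_of_nonneg (Real.exp_pos _).le]
    exact Real.exp_le_exp.mpr (by nlinarith)
  · exact exp_neg_integrableOn_Ioi 0 (by positivity)
  · rw [ae_restrict_iff' measurableSet_Ioi]
    filter_upwards with u hu
    intro b _
    have hu : (0:ℝ) < u := hu
    have h1 : HasDerivAt (fun b : ℝ => Real.exp (-b * u)) (Real.exp (-b * u) * (-1 * u)) b :=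
      (((hasDerivAt_id' b).neg.mul_const u).exp)
    have h2 := (h1.const_sub (Real.exp (-a * u))).div_const u
    refine h2.congr_deriv ?_
    field_simp

lemma frullani {a b : ℝ} (ha : 0 < a) (hb : 0 < b) :
    ∫ u in Ioi (0:ℝ), (Real.exp (-a * u) - Real.exp (-b * u)) / u = Real.log b - Real.log a := by
  set G := fun b => ∫ u in Ioi (0:ℝ), (Real.exp (-a * u) - Real.exp (-b * u)) / u with hG
  have hconst : ∀ x ∈ Ioi (0:ℝ), HasDerivAt (fun b => G b - (Real.log b - Real.log a)) 0 x := by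
    intro x hx
    have hx : (0:ℝ) < x := hx
    have h1 := frullani_hasDerivAt ha hx
    have h2 := (Real.hasDerivAt_log (ne_of_gt hx)).sub_const (Real.log a)
    have := h1.sub h2
    refine this.congr_deriv ?_
    field_simp
    ring
  have h0 : G a - (Real.log a - Real.log a) = G b - (Real.log b - Real.log a) :=
    binet_const_of_deriv_zero hconst ha hb
  have hGa : G a = 0 := by
    rw [hG]
    simp
  rw [hGa] at h0
  simp only [sub_self, zero_sub, sub_zero] at h0
  linarith [h0]

lemma binet_integrable2 {t : ℝ} (ht : 0 < t) :
    IntegrableOn (fun u => binetF u * Real.exp (-t * u)) (Ioi (0:ℝ)) := by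
  apply binet_integrable_aux (c := 1/2) (b := t) _ ht
  · intro u hu
    have hu : (0:ℝ) < u := hu
    have h1 := binetF_nonneg hu
    have h2 := binetF_le_half hu
    rw [abs_of_nonneg (by positivity)]
    have : Real.exp (-t*u) > 0 := Real.exp_pos _
    nlinarith
  · exact binetF_continuousOn.mul
      (Real.continuous_exp.comp (continuous_const.mul continuous_id)).continuousOn

lemma binetμ_hasDerivAt {t₀ : ℝ} (ht₀ : 0 < t₀) :
    HasDerivAt binetμ (-∫ u in Ioi (0:ℝ), binetF u * Real.exp (-t₀ * u)) t₀ := by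
  have key := hasDerivAt_integral_of_dominated_loc_of_deriv_le
    (F := fun t u => binetF u * Real.exp (-t * u) / u)
    (F' := fun t u => -(binetF u * Real.exp (-t * u)))
    (x₀ := t₀) (s := Metric.ball t₀ (t₀/2)) (μ := volume.restrict (Ioi 0))
    (bound := fun u => (1/2) * Real.exp (-(t₀/2) * u)) (Metric.ball_mem_nhds _ (by positivity))
    ?_ ?_ ?_ ?_ ?_ ?_
  · have h2 := key.2
    rwa [integral_neg] at h2
  · filter_upwards with t
    apply ContinuousOn.aestronglyMeasurable _ measurableSet_Ioi
    exact (binetF_continuousOn.mul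
      (Real.continuous_exp.comp (continuous_const.mul continuous_id)).continuousOn).div
      continuousOn_id (fun x hx => ne_of_gt hx)
  · exact binet_integrand_integrable ht₀
  · apply ContinuousOn.aestronglyMeasurable _ measurableSet_Ioi
    exact (binetF_continuousOn.mul
      (Real.continuous_exp.comp (continuous_const.mul continuous_id)).continuousOn).neg
  · rw [ae_restrict_iff' measurableSet_Ioi]
    filter_upwards with u hu
    intro s hball
    have hu : (0:ℝ) < u := hu
    have hs : t₀/2 ≤ s := by
      have := abs_lt.mp (mem_ball_iff_norm.mp hball)
      linarith [this.1]
    have h1 := binetF_nonneg hu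
    have h2 := binetF_le_half hu
    rw [Real.norm_eq_abs, abs_neg, abs_of_nonneg (by positivity)]
    have hexp : Real.exp (-s * u) ≤ Real.exp (-(t₀/2) * u) := Real.exp_le_exp.mpr (by nlinarith)
    nlinarith [Real.exp_pos (-s * u), Real.exp_pos (-(t₀/2) * u)]
  · exact (exp_neg_integrableOn_Ioi 0 (by positivity)).const_mul _
  · rw [ae_restrict_iff' measurableSet_Ioi]
    filter_upwards with u hu
    intro s _
    have hu : (0:ℝ) < u := hu
    have h1 : HasDerivAt (fun s : ℝ => Real.exp (-s * u)) (Real.exp (-s * u) * (-1 * u)) s :=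
      ((hasDerivAt_id' s).neg.mul_const u).exp
    have h2 := (h1.const_mul (binetF u)).div_const u
    refine h2.congr_deriv ?_
    field_simp

lemma binetJ_eval {t : ℝ} (ht : 0 < t) :
    ∫ u in Ioi (0:ℝ), binetF u * (Real.exp (-t * u) - Real.exp (-(t+1) * u))
      = 1/(t+1) + (1/2) * (1/t - 1/(t+1)) - (Real.log (t+1) - Real.log t) := by
  have ht1 : (0:ℝ) < t + 1 := by linarith
  have hcongr : ∀ u ∈ Ioi (0:ℝ),
      binetF u * (Real.exp (-t * u) - Real.exp (-(t+1) * u))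
        = Real.exp (-(t+1) * u) + (1/2) * (Real.exp (-t * u) - Real.exp (-(t+1) * u))
          - (Real.exp (-t * u) - Real.exp (-(t+1) * u)) / u := by
    intro u hu
    have hu : (0:ℝ) < u := hu
    have hE := exp_sub_one_pos' hu
    have hsplit : Real.exp (-(t+1) * u) = Real.exp (-t * u) / Real.exp u := by
      rw [eq_div_iff (Real.exp_pos u).ne', ← Real.exp_add]
      ring_nf
    unfold binetF
    rw [hsplit]
    field_simp
    ring
  rw [setIntegral_congr_fun measurableSet_Ioi hcongr]
  have i1 : IntegrableOn (fun u => Real.exp (-(t+1) * u)) (Ioi (0:ℝ)) :=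
    exp_neg_integrableOn_Ioi 0 ht1
  have i2 : IntegrableOn (fun u => (1/2) * (Real.exp (-t * u) - Real.exp (-(t+1) * u)))
      (Ioi (0:ℝ)) :=
    (((exp_neg_integrableOn_Ioi 0 ht).sub (exp_neg_integrableOn_Ioi 0 ht1))).const_mul _
  have i3 : IntegrableOn (fun u => (Real.exp (-t * u) - Real.exp (-(t+1) * u)) / u)
      (Ioi (0:ℝ)) := frullani_integrable ht ht1
  have i12 : IntegrableOn (fun u => Real.exp (-(t+1) * u)
      + (1/2) * (Real.exp (-t * u) - Real.exp (-(t+1) * u))) (Ioi (0:ℝ)) := i1.add i2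
  rw [integral_sub i12 i3, integral_add i1 i2, integral_const_mul,
    integral_sub (exp_neg_integrableOn_Ioi 0 ht) (exp_neg_integrableOn_Ioi 0 ht1),
    integral_exp_neg_mul_Ioi_zero ht, integral_exp_neg_mul_Ioi_zero ht1,
    frullani ht ht1]

noncomputable def binetD (t : ℝ) : ℝ := binetμ t - binetμ (t + 1)
noncomputable def binetR (t : ℝ) : ℝ := (t + 1/2) * (Real.log (t+1) - Real.log t) - 1

lemma binetD_hasDerivAt {t : ℝ} (ht : 0 < t) :
    HasDerivAt binetD (Real.log (t+1) - Real.log t - (1/(2*t) + 1/(2*(t+1)))) t := by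
  have ht1 : (0:ℝ) < t + 1 := by linarith
  have h1 := binetμ_hasDerivAt ht
  have h2 : HasDerivAt (fun s : ℝ => binetμ (s + 1))
      ((-∫ u in Ioi (0:ℝ), binetF u * Real.exp (-(t+1) * u)) * 1) t :=
    (binetμ_hasDerivAt ht1).comp (h := fun s : ℝ => s + 1) t ((hasDerivAt_id' t).add_const 1)
  have h3 := h1.sub h2
  have heq : (-∫ u in Ioi (0:ℝ), binetF u * Real.exp (-t * u))
      - (-∫ u in Ioi (0:ℝ), binetF u * Real.exp (-(t+1) * u)) * 1
      = Real.log (t+1) - Real.log t - (1/(2*t) + 1/(2*(t+1))) := by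
    rw [mul_one, ← neg_sub' , ← integral_sub (binet_integrable2 ht) (binet_integrable2 ht1)]
    have : ∫ u in Ioi (0:ℝ),
        (binetF u * Real.exp (-t * u) - binetF u * Real.exp (-(t+1) * u))
        = ∫ u in Ioi (0:ℝ), binetF u * (Real.exp (-t * u) - Real.exp (-(t+1) * u)) := by
      congr 1 with u
      ring
    rw [this, binetJ_eval ht]
    field_simp
    ring
  rw [heq] at h3
  exact h3

lemma binetR_hasDerivAt {t : ℝ} (ht : 0 < t) :
    HasDerivAt binetR (Real.log (t+1) - Real.log t - (1/(2*t) + 1/(2*(t+1)))) t := by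
  have ht1 : (0:ℝ) < t + 1 := by linarith
  have hlog1 : HasDerivAt (fun s : ℝ => Real.log (s + 1)) ((t+1)⁻¹ * 1) t :=
    (Real.hasDerivAt_log ht1.ne').comp (h := fun s : ℝ => s + 1) t ((hasDerivAt_id' t).add_const 1)
  have hlog : HasDerivAt (fun s : ℝ => Real.log (s+1) - Real.log s) ((t+1)⁻¹ * 1 - t⁻¹) t :=
    hlog1.sub (Real.hasDerivAt_log ht.ne')
  have hid : HasDerivAt (fun s : ℝ => s + 1/2) 1 t := (hasDerivAt_id' t).add_const _
  have h := (hid.mul hlog).sub_const 1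
  refine h.congr_deriv ?_
  field_simp
  ring

lemma binetR_tendsto : Tendsto binetR atTop (𝓝 0) := by
  have h2 : Tendsto (fun t : ℝ => Real.log (1 + 1/t)) atTop (𝓝 0) := by
    have hb : Tendsto (fun t : ℝ => 1 + 1/t) atTop (𝓝 (1:ℝ)) := by
      have := (tendsto_const_nhds (x := (1:ℝ)) (f := atTop)).add
        (tendsto_inv_atTop_zero (𝕜 := ℝ))
      simpa [one_div] using this
    have := ((Real.continuousAt_log one_ne_zero).tendsto).comp hb
    simpa [Function.comp_def] using this
  have h1 : Tendsto (fun t : ℝ => t * Real.log (1 + 1/t)) atTop (𝓝 1) := by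
    simpa using Real.tendsto_mul_log_one_add_div_atTop 1
  have hmain : Tendsto (fun t : ℝ => t * Real.log (1 + 1/t)
      + (1/2) * Real.log (1 + 1/t) - 1) atTop (𝓝 0) := by
    have := (h1.add (h2.const_mul (1/2))).sub_const 1
    simpa using this
  apply hmain.congr'
  filter_upwards [eventually_gt_atTop (0:ℝ)] with t ht
  have ht1 : (0:ℝ) < t + 1 := by linarith
  unfold binetR
  have : Real.log (t+1) - Real.log t = Real.log (1 + 1/t) := by
    rw [← Real.log_div ht1.ne' ht.ne']
    congr 1
    field_simp
  rw [this]
  ring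

lemma binetμ_tendsto : Tendsto binetμ atTop (𝓝 0) := by
  apply tendsto_of_tendsto_of_tendsto_of_le_of_le' (g := fun _ => (0:ℝ))
    (h := fun t => 1/(4*t)) tendsto_const_nhds
  · have : Tendsto (fun t : ℝ => 4 * t) atTop atTop :=
      (tendsto_id.const_mul_atTop (by norm_num))
    exact (tendsto_inv_atTop_zero.comp this).congr (fun t => by simp [one_div])
  · filter_upwards [eventually_gt_atTop (0:ℝ)] with t ht
    exact binetμ_nonneg ht
  · filter_upwards [eventually_gt_atTop (0:ℝ)] with t ht
    exact binetμ_le ht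

lemma binetD_eq_binetR {t : ℝ} (ht : 0 < t) : binetD t = binetR t := by
  have hconst : ∀ x ∈ Ioi (0:ℝ), HasDerivAt (fun s => binetD s - binetR s) 0 x := by
    intro x hx
    have hx : (0:ℝ) < x := hx
    have := (binetD_hasDerivAt hx).sub (binetR_hasDerivAt hx)
    refine this.congr_deriv ?_
    simp
  have hc : ∀ x : ℝ, 0 < x → binetD x - binetR x = binetD 1 - binetR 1 := fun x hx =>
    binet_const_of_deriv_zero hconst hx one_pos
  have htend : Tendsto (fun s => binetD s - binetR s) atTop (𝓝 0) := by
    have hD : Tendsto binetD atTop (𝓝 0) := by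
      have h1 : Tendsto (fun s : ℝ => binetμ (s + 1)) atTop (𝓝 0) :=
        binetμ_tendsto.comp (tendsto_atTop_add_const_right _ 1 tendsto_id)
      have := binetμ_tendsto.sub h1
      rw [sub_zero] at this
      exact this
    simpa using hD.sub binetR_tendsto
  have hzero : binetD 1 - binetR 1 = 0 := by
    have heq : Tendsto (fun s => binetD s - binetR s) atTop (𝓝 (binetD 1 - binetR 1)) := by
      apply Tendsto.congr' _ (tendsto_const_nhds)
      filter_upwards [eventually_gt_atTop (0:ℝ)] with s hs
      exact (hc s hs).symm
    exact (tendsto_nhds_unique heq htend)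
  have := hc t ht
  rw [hzero] at this
  linarith

/-- functional equation for `binetμ` -/
lemma binetμ_fe {t : ℝ} (ht : 0 < t) :
    binetμ t - binetμ (t+1) = (t + 1/2) * (Real.log (t+1) - Real.log t) - 1 :=
  binetD_eq_binetR ht

lemma binet_delta_tendsto :
    Tendsto (fun n : ℕ => Real.log (Stirling.stirlingSeq n) - Real.log (Real.sqrt π))
      atTop (𝓝 0) := by
  have hπ : Real.sqrt π ≠ 0 := by positivity
  have h := ((Real.continuousAt_log hπ).tendsto).comp Stirling.tendsto_stirlingSeq_sqrt_pi
  simpa using h.sub_const (Real.log (Real.sqrt π))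

lemma binet_log_factorial {n : ℕ} (hn : 1 ≤ n) :
    Real.log ((Nat.factorial n)) = (n + 1/2) * Real.log n - n + (1/2) * Real.log (2*π)
      + (Real.log (Stirling.stirlingSeq n) - Real.log (Real.sqrt π)) := by
  have hn0 : (0:ℝ) < n := by exact_mod_cast hn
  have hfac : (0:ℝ) < (Nat.factorial n) := by exact_mod_cast Nat.factorial_pos n
  have hs : (0:ℝ) < Real.sqrt (2 * n) := Real.sqrt_pos.mpr (by positivity)
  have hp : (0:ℝ) < ((n : ℝ) / Real.exp 1) ^ n := by positivity
  have h1 : Real.log (Stirling.stirlingSeq n)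
      = Real.log ((Nat.factorial n)) - (Real.log (Real.sqrt (2 * n)) + Real.log (((n:ℝ) / Real.exp 1) ^ n)) := by
    rw [Stirling.stirlingSeq, Real.log_div hfac.ne' (by positivity), Real.log_mul hs.ne' hp.ne']
  have h2 : Real.log (Real.sqrt (2 * (n:ℝ))) = (Real.log 2 + Real.log n) / 2 := by
    rw [Real.log_sqrt (by positivity), Real.log_mul (by norm_num) hn0.ne']
  have h3 : Real.log (((n:ℝ) / Real.exp 1) ^ n) = n * (Real.log n - 1) := by
    rw [Real.log_pow, Real.log_div hn0.ne' (Real.exp_pos 1).ne', Real.log_exp]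
  have h4 : Real.log (Real.sqrt π) = Real.log π / 2 := Real.log_sqrt Real.pi_pos.le
  have h5 : Real.log (2 * π) = Real.log 2 + Real.log π :=
    Real.log_mul (by norm_num) Real.pi_pos.ne'
  rw [h2, h3] at h1
  rw [h4, h5]
  linarith [h1]

lemma binet_gamma_upper {s : ℝ} (hs0 : 0 < s) (hs1 : s ≤ 1) {n : ℕ} (hn : 1 ≤ n) :
    Real.log (Real.Gamma ((n : ℝ) + s))
      ≤ Real.log (Nat.factorial n) + (s - 1) * Real.log n := by
  have hn0 : (0:ℝ) < n := by exact_mod_cast hn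
  have hx : (n:ℝ) ∈ Ioi (0:ℝ) := hn0
  have hy : (n:ℝ) + 1 ∈ Ioi (0:ℝ) := by simp; linarith
  have hcomb := Real.convexOn_log_Gamma.2 hx hy (by linarith : (0:ℝ) ≤ 1 - s)
    hs0.le (by ring)
  have hpt : (1 - s) • (n:ℝ) + s • ((n:ℝ) + 1) = (n:ℝ) + s := by
    simp [smul_eq_mul]; ring
  rw [hpt] at hcomb
  have hΓn1 : Real.Gamma ((n:ℝ) + 1) = Nat.factorial n := Real.Gamma_nat_eq_factorial n
  have hΓn : Real.log (Real.Gamma (n:ℝ)) = Real.log (Nat.factorial n) - Real.log n := by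
    have h := Real.Gamma_add_one hn0.ne'
    rw [hΓn1] at h
    rw [h, Real.log_mul hn0.ne' (Real.Gamma_pos_of_pos hn0).ne']
    ring
  simp only [Function.comp_apply, smul_eq_mul] at hcomb
  rw [hΓn, hΓn1] at hcomb
  calc Real.log (Real.Gamma ((n:ℝ) + s))
      ≤ (1 - s) * (Real.log (Nat.factorial n) - Real.log n)
        + s * Real.log (Nat.factorial n) := hcomb
    _ = Real.log (Nat.factorial n) + (s - 1) * Real.log n := by ring

lemma binet_gamma_lower {s : ℝ} (hs0 : 0 < s) (hs1 : s ≤ 1) {n : ℕ} (hn : 1 ≤ n) :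
    Real.log (Nat.factorial n)
      ≤ Real.log (Real.Gamma ((n : ℝ) + s)) + (1 - s) * Real.log ((n:ℝ) + s) := by
  have hn0 : (0:ℝ) < n := by exact_mod_cast hn
  have hns : (0:ℝ) < (n:ℝ) + s := by linarith
  have hx : (n:ℝ) + s ∈ Ioi (0:ℝ) := hns
  have hy : (n:ℝ) + 1 + s ∈ Ioi (0:ℝ) := by simp; linarith
  have hcomb := Real.convexOn_log_Gamma.2 hx hy hs0.le (by linarith : (0:ℝ) ≤ 1 - s) (by ring)
  have hpt : s • ((n:ℝ) + s) + (1 - s) • ((n:ℝ) + 1 + s) = (n:ℝ) + 1 := by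
    simp [smul_eq_mul]; ring
  rw [hpt] at hcomb
  simp only [Function.comp_apply, smul_eq_mul] at hcomb
  have hΓn1 : Real.Gamma ((n:ℝ) + 1) = Nat.factorial n := Real.Gamma_nat_eq_factorial n
  have hΓrec : Real.log (Real.Gamma ((n:ℝ) + 1 + s))
      = Real.log ((n:ℝ) + s) + Real.log (Real.Gamma ((n:ℝ) + s)) := by
    have h : Real.Gamma (((n:ℝ) + s) + 1) = ((n:ℝ) + s) * Real.Gamma ((n:ℝ) + s) :=
      Real.Gamma_add_one hns.ne'
    rw [show (n:ℝ) + 1 + s = ((n:ℝ) + s) + 1 by ring, h,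
      Real.log_mul hns.ne' (Real.Gamma_pos_of_pos hns).ne']
  rw [hΓn1, hΓrec] at hcomb
  calc Real.log (Nat.factorial n)
      ≤ s * Real.log (Real.Gamma ((n:ℝ) + s))
        + (1 - s) * (Real.log ((n:ℝ) + s) + Real.log (Real.Gamma ((n:ℝ) + s))) := hcomb
    _ = Real.log (Real.Gamma ((n:ℝ) + s)) + (1 - s) * Real.log ((n:ℝ) + s) := by ring

lemma binet_loglim (s c : ℝ) (hs : 0 < s) :
    Tendsto (fun n : ℕ => ((n:ℝ) + c) * (Real.log ((n:ℝ) + s) - Real.log n)) atTop (𝓝 s) := by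
  have hcast : Tendsto (fun n : ℕ => (n:ℝ)) atTop atTop := tendsto_natCast_atTop_atTop
  have h1 : Tendsto (fun n : ℕ => (n:ℝ) * Real.log (1 + s/(n:ℝ))) atTop (𝓝 s) :=
    (Real.tendsto_mul_log_one_add_div_atTop s).comp hcast
  have h2 : Tendsto (fun n : ℕ => Real.log (1 + s/(n:ℝ))) atTop (𝓝 0) := by
    have hb : Tendsto (fun n : ℕ => 1 + s/(n:ℝ)) atTop (𝓝 (1:ℝ)) := by
      have := tendsto_const_nhds (x := (1:ℝ)) (f := atTop (α := ℕ)) |>.add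
        ((tendsto_inv_atTop_zero.comp hcast).const_mul s)
      simpa [div_eq_mul_inv] using this
    have := ((Real.continuousAt_log one_ne_zero).tendsto).comp hb
    simpa [Function.comp_def] using this
  have hmain : Tendsto (fun n : ℕ => (n:ℝ) * Real.log (1 + s/(n:ℝ))
      + c * Real.log (1 + s/(n:ℝ))) atTop (𝓝 s) := by
    simpa using h1.add (h2.const_mul c)
  apply hmain.congr'
  filter_upwards [eventually_ge_atTop 1] with n hn
  have hn0 : (0:ℝ) < n := by exact_mod_cast hn
  have : Real.log ((n:ℝ) + s) - Real.log n = Real.log (1 + s/(n:ℝ)) := by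
    rw [← Real.log_div (by linarith) hn0.ne']
    congr 1
    field_simp
  rw [this]
  ring

lemma binet_stirling_gamma {s : ℝ} (hs0 : 0 < s) (hs1 : s ≤ 1) :
    Tendsto (fun n : ℕ => Real.log (Real.Gamma ((n:ℝ) + s))
      - (((n:ℝ) + s - 1/2) * Real.log ((n:ℝ) + s) - ((n:ℝ) + s)
        + (1/2) * Real.log (2*π))) atTop (𝓝 0) := by
  set δ := fun n : ℕ => Real.log (Stirling.stirlingSeq n) - Real.log (Real.sqrt π) with hδ
  have hU : Tendsto (fun n : ℕ => δ n
      - ((n:ℝ) + (s - 1/2)) * (Real.log ((n:ℝ) + s) - Real.log n) + s) atTop (𝓝 0) := by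
    have := (binet_delta_tendsto.sub (binet_loglim s (s - 1/2) hs0)).add_const s
    simpa using this
  have hL : Tendsto (fun n : ℕ => δ n
      - ((n:ℝ) + 1/2) * (Real.log ((n:ℝ) + s) - Real.log n) + s) atTop (𝓝 0) := by
    have := (binet_delta_tendsto.sub (binet_loglim s (1/2) hs0)).add_const s
    simpa using this
  apply tendsto_of_tendsto_of_tendsto_of_le_of_le' hL hU
  · filter_upwards [eventually_ge_atTop 1] with n hn
    have hf := binet_log_factorial hn
    have hg := binet_gamma_lower hs0 hs1 hn
    have hn0 : (0:ℝ) < n := by exact_mod_cast hn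
    nlinarith [hg, hf]
  · filter_upwards [eventually_ge_atTop 1] with n hn
    have hf := binet_log_factorial hn
    have hg := binet_gamma_upper hs0 hs1 hn
    nlinarith [hg, hf]

noncomputable def binetH (t : ℝ) : ℝ :=
  Real.log (Real.Gamma t)
    - ((t - 1/2) * Real.log t - t + (1/2) * Real.log (2*π) + binetμ t)

lemma binetH_add_one {t : ℝ} (ht : 0 < t) : binetH (t + 1) = binetH t := by
  have hlog : Real.log (Real.Gamma (t+1)) = Real.log t + Real.log (Real.Gamma t) := by
    rw [Real.Gamma_add_one ht.ne', Real.log_mul ht.ne' (Real.Gamma_pos_of_pos ht).ne']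
  have fe := binetμ_fe ht
  unfold binetH
  rw [hlog]
  linear_combination fe

lemma binetH_add_nat {t : ℝ} (ht : 0 < t) : ∀ n : ℕ, binetH (t + n) = binetH t := by
  intro n
  induction n with
  | zero => simp
  | succ k ih =>
    have hk : (0:ℝ) < t + k := by positivity
    have := binetH_add_one hk
    rw [show t + (k:ℝ) + 1 = t + ((k:ℕ) + 1 : ℕ) by push_cast; ring] at this
    rw [this]
    exact ih

lemma binetH_eq_zero {t : ℝ} (ht : 0 < t) (ht1 : t ≤ 1) : binetH t = 0 := by
  have hμ : Tendsto (fun n : ℕ => binetμ ((n:ℝ) + t)) atTop (𝓝 0) := by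
    apply binetμ_tendsto.comp
    exact tendsto_atTop_add_const_right _ t tendsto_natCast_atTop_atTop
  have hA := binet_stirling_gamma ht ht1
  have key : Tendsto (fun n : ℕ => binetH (t + n)) atTop (𝓝 0) := by
    have := hA.sub hμ
    rw [sub_zero] at this
    apply this.congr
    intro n
    unfold binetH
    rw [show t + (n:ℝ) = (n:ℝ) + t by ring]
    ring
  have hconst : Tendsto (fun n : ℕ => binetH (t + n)) atTop (𝓝 (binetH t)) := by
    apply Tendsto.congr (fun n => (binetH_add_nat ht n).symm) tendsto_const_nhds
  exact tendsto_nhds_unique hconst key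

lemma binetH_eq_zero' {t : ℝ} (ht : 0 < t) : binetH t = 0 := by
  set m := ⌈t⌉₊ with hm
  have hm1 : 1 ≤ m := Nat.one_le_iff_ne_zero.mpr (by
    simp [hm, Nat.ceil_eq_zero, not_le, ht])
  set s := t - (m - 1 : ℕ) with hs
  have hmn : ((m - 1 : ℕ) : ℝ) = (m:ℝ) - 1 := by
    push_cast [Nat.cast_sub hm1]
    ring
  have hub : t ≤ m := Nat.le_ceil t
  have hlb : (m:ℝ) - 1 < t := by
    have := Nat.ceil_lt_add_one ht.le
    linarith
  have hs0 : 0 < s := by rw [hs, hmn]; linarith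
  have hs1 : s ≤ 1 := by rw [hs, hmn]; linarith
  have hts : t = s + (m - 1 : ℕ) := by rw [hs]; ring
  rw [hts, binetH_add_nat hs0, binetH_eq_zero hs0 hs1]

open Real in
theorem stmt8 (t : ℝ) (ht : 0 < t) :
    Real.log (Real.Gamma t) =
      (t - 1 / 2) * Real.log t - t + (1 / 2) * Real.log (2 * π) +
        ∫ u in Set.Ioi (0 : ℝ),
          (1 / (Real.exp u - 1) - 1 / u + 1 / 2) * Real.exp (-t * u) / u := by
  have h := binetH_eq_zero' ht
  unfold binetH binetμ binetF at h
  linarith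
end

section
/- For every integer k ≥ 0 and every real t > 0, the k-th derivative of the function t ↦ 1/(e^t - 1) equals (-1)^k · Σ_{p=1}^{k+1} (p-1)! · S(k+1, p) · (1/(e^t - 1))^p, where S(n, p) denotes the Stirling numbers of the second kind. -/
open Finset

/-- Stirling numbers of the second kind. -/
noncomputable def stirling2 (n p : ℕ) : ℚ :=
  (1 / (p.factorial : ℚ)) *
    ∑ q ∈ Finset.Icc 1 p, (-1 : ℚ) ^ (p - q) * (p.choose q) * (q : ℚ) ^ n

noncomputable def Tsum (n p : ℕ) : ℚ :=
  ∑ q ∈ Finset.Icc 1 p, (-1 : ℚ) ^ (p - q) * (p.choose q) * (q : ℚ) ^ n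

lemma stirling2_eq (n p : ℕ) : stirling2 n p = Tsum n p / p.factorial := by
  rw [stirling2, Tsum]; ring

lemma Tsum_rec (n p' : ℕ) :
    Tsum (n + 1) (p' + 1) = (p' + 1) * (Tsum n (p' + 1) + Tsum n p') := by
  have key : ∀ q ∈ Icc 1 (p' + 1),
      (-1 : ℚ) ^ (p' + 1 - q) * ((p' + 1).choose q) * (q : ℚ) ^ (n + 1)
      = (p' + 1) * ((-1 : ℚ) ^ (p' + 1 - q) * ((p' + 1).choose q) * (q : ℚ) ^ n)
        - (p' + 1) * ((-1 : ℚ) ^ (p' + 1 - q) * (p'.choose q) * (q : ℚ) ^ n) := by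
    intro q hq
    simp only [mem_Icc] at hq
    obtain ⟨q', rfl⟩ : ∃ q'', q = q'' + 1 := ⟨q - 1, by omega⟩
    have h1 : (p' + 1) * p'.choose q' = (p' + 1).choose (q' + 1) * (q' + 1) :=
      Nat.add_one_mul_choose_eq p' q'
    have h2 : (p' + 1).choose (q' + 1) = p'.choose q' + p'.choose (q' + 1) :=
      Nat.choose_succ_succ p' q'
    have h3 : ((p' + 1).choose (q' + 1) : ℚ) * ((q' : ℚ) + 1)
        = ((p' : ℚ) + 1) * (((p' + 1).choose (q' + 1) : ℚ) - (p'.choose (q' + 1) : ℚ)) := by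
      have h1' := congrArg (Nat.cast : ℕ → ℚ) h1
      have h2' := congrArg (Nat.cast : ℕ → ℚ) h2
      push_cast at h1' h2'
      linear_combination -h1' - ((p' : ℚ) + 1) * h2'
    have he : p' + 1 - (q' + 1) = p' - q' := by omega
    rw [he]
    push_cast
    linear_combination ((-1 : ℚ) ^ (p' - q') * ((q' : ℚ) + 1) ^ n) * h3
  rw [Tsum, Finset.sum_congr rfl key, Finset.sum_sub_distrib, ← Finset.mul_sum, ← Finset.mul_sum]
  have hU : ∑ q ∈ Icc 1 (p' + 1), (-1 : ℚ) ^ (p' + 1 - q) * (p'.choose q) * (q : ℚ) ^ n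
      = - Tsum n p' := by
    have hins : Icc 1 (p' + 1) = insert (p' + 1) (Icc 1 p') := by
      ext x; simp only [mem_insert, mem_Icc]; omega
    rw [hins, Finset.sum_insert (by simp [mem_Icc])]
    have hc0 : (p'.choose (p' + 1) : ℚ) = 0 := by
      rw [Nat.choose_eq_zero_of_lt (by omega)]; simp
    rw [hc0, Tsum, ← Finset.sum_neg_distrib]
    rw [mul_zero, zero_mul, zero_add]
    apply Finset.sum_congr rfl
    intro q hq
    simp only [mem_Icc] at hq
    have he : p' + 1 - q = (p' - q) + 1 := by omega
    rw [he, pow_succ]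
    ring
  rw [← Tsum, hU]
  ring

lemma stirling2_zero_right (n : ℕ) : stirling2 n 0 = 0 := by
  simp [stirling2]

lemma stirling2_rec (n p : ℕ) (hp : 1 ≤ p) :
    stirling2 (n + 1) p = p * stirling2 n p + stirling2 n (p - 1) := by
  obtain ⟨p', rfl⟩ : ∃ p'', p = p'' + 1 := ⟨p - 1, by omega⟩
  simp only [Nat.add_sub_cancel, stirling2_eq, Tsum_rec]
  have h1 : ((p' + 1).factorial : ℚ) = (p' + 1) * (p'.factorial : ℚ) := by
    rw [Nat.factorial_succ]; push_cast; ring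
  have h2 : ((p' + 1 : ℕ) : ℚ) ≠ 0 := by positivity
  have h3 : ((p'.factorial : ℚ)) ≠ 0 := by
    exact_mod_cast Nat.factorial_ne_zero p'
  rw [h1]
  field_simp
  push_cast
  ring

lemma stirling2_zero_left (p : ℕ) (hp : 1 ≤ p) :
    stirling2 0 p = -(-1 : ℚ) ^ p / p.factorial := by
  rw [stirling2_eq]
  congr 1
  have : ∀ q ∈ Finset.Icc 1 p, (-1 : ℚ) ^ (p - q) * (p.choose q) * (q : ℚ) ^ 0
      = (-1 : ℚ) ^ p * ((-1 : ℚ) ^ q * (p.choose q)) := by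
    intro q hq
    simp only [Finset.mem_Icc] at hq
    have : (-1 : ℚ) ^ (p - q) * (-1 : ℚ) ^ q = (-1 : ℚ) ^ p := by
      rw [← pow_add]; congr 1; omega
    have h4 : (-1 : ℚ) ^ (p - q) = (-1 : ℚ) ^ p * (-1 : ℚ) ^ q := by
      have hsq : (-1 : ℚ) ^ q * (-1 : ℚ) ^ q = 1 := by
        rw [← pow_add, ← two_mul, pow_mul]; norm_num
      calc (-1 : ℚ) ^ (p - q) = (-1 : ℚ) ^ (p - q) * ((-1 : ℚ) ^ q * (-1 : ℚ) ^ q) := by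
            rw [hsq, mul_one]
        _ = (-1 : ℚ) ^ p * (-1 : ℚ) ^ q := by rw [← mul_assoc, this]
    rw [h4]; ring
  rw [Tsum, Finset.sum_congr rfl this, ← Finset.mul_sum]
  have halt : ∑ q ∈ Finset.range (p + 1), (-1 : ℚ) ^ q * (p.choose q) = 0 := by
    have := @Int.alternating_sum_range_choose p
    rw [if_neg (by omega)] at this
    exact_mod_cast congrArg (Int.cast : ℤ → ℚ) this
  have hsplit : ∑ q ∈ Finset.range (p + 1), (-1 : ℚ) ^ q * (p.choose q)
      = 1 + ∑ q ∈ Finset.Icc 1 p, (-1 : ℚ) ^ q * (p.choose q) := by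
    have hset : Finset.range (p + 1) = insert 0 (Finset.Icc 1 p) := by
      ext x; simp only [Finset.mem_range, Finset.mem_insert, Finset.mem_Icc]; omega
    rw [hset, Finset.sum_insert (by simp)]
    simp
  have : ∑ q ∈ Finset.Icc 1 p, (-1 : ℚ) ^ q * (p.choose q) = -1 := by
    have := halt
    rw [hsplit] at this
    linarith
  rw [this]
  ring


lemma stirling2_eq_zero_of_lt : ∀ n p : ℕ, 1 ≤ n → n < p → stirling2 n p = 0 := by
  intro n
  induction n with
  | zero => intro p h; omega
  | succ m ih =>
    intro p h1 hlt
    rcases Nat.eq_zero_or_pos m with hm | hm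
    · subst hm
      -- stirling2 1 p = 0 for p ≥ 2
      have hp2 : 2 ≤ p := hlt
      have := stirling2_rec 0 p (by omega)
      rw [this, stirling2_zero_left p (by omega), stirling2_zero_left (p - 1) (by omega)]
      obtain ⟨p', rfl⟩ : ∃ p'', p = p'' + 2 := ⟨p - 2, by omega⟩
      have he : p' + 2 - 1 = p' + 1 := by omega
      rw [he]
      have hf : ((p' + 2).factorial : ℚ) = (p' + 2) * ((p' + 1).factorial : ℚ) := by
        rw [Nat.factorial_succ]; push_cast; ring
      have h2 : ((p' + 2 : ℕ) : ℚ) ≠ 0 := by positivity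
      have h3 : (((p' + 1).factorial : ℚ)) ≠ 0 := by
        exact_mod_cast Nat.factorial_ne_zero (p' + 1)
      rw [hf]
      have hpow : (-1 : ℚ) ^ (p' + 2) = (-1 : ℚ) ^ (p' + 1) * (-1) := by
        rw [pow_succ]
      rw [hpow]
      push_cast
      field_simp
      ring
    · rw [stirling2_rec m p (by omega), ih p (by omega) (by omega),
        ih (p - 1) (by omega) (by omega)]
      ring

lemma coeff_rec (k p : ℕ) (hp : 1 ≤ p) :
    ((p - 1).factorial : ℝ) * (stirling2 (k + 2) p : ℝ)
      = (p : ℝ) * (((p - 1).factorial : ℝ) * (stirling2 (k + 1) p : ℝ))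
        + ((p - 1 : ℕ) : ℝ) * (((p - 1 - 1).factorial : ℝ) * (stirling2 (k + 1) (p - 1) : ℝ)) := by
  have hrec := stirling2_rec (k + 1) p hp
  rcases Nat.lt_or_ge p 2 with h2 | h2
  · have hp1 : p = 1 := by omega
    subst hp1
    simp only [Nat.sub_self, stirling2_zero_right] at hrec ⊢
    rw [show (2 : ℕ) = 1 + 1 from rfl] at *
    rw [hrec]
    push_cast
    simp [Nat.factorial]
  · obtain ⟨p', rfl⟩ : ∃ p'', p = p'' + 2 := ⟨p - 2, by omega⟩
    have e1 : p' + 2 - 1 = p' + 1 := by omega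
    have e2 : p' + 1 - 1 = p' := by omega
    rw [e1, e2] at *
    have hfac : ((p' + 1).factorial : ℝ) = ((p' : ℝ) + 1) * (p'.factorial : ℝ) := by
      rw [Nat.factorial_succ]; push_cast; ring
    rw [hrec, hfac]
    push_cast
    ring

lemma poly_id (k : ℕ) (y : ℝ) :
    ∑ p ∈ Finset.Icc 1 (k + 1),
        ((p - 1).factorial : ℝ) * (stirling2 (k + 1) p : ℝ) * ((p : ℝ) * (y ^ p + y ^ (p + 1)))
      = ∑ p ∈ Finset.Icc 1 (k + 2),
          ((p - 1).factorial : ℝ) * (stirling2 (k + 2) p : ℝ) * y ^ p := by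
  have split : ∀ p : ℕ, ((p - 1).factorial : ℝ) * (stirling2 (k + 1) p : ℝ) * ((p : ℝ) * (y ^ p + y ^ (p + 1)))
      = (p : ℝ) * (((p - 1).factorial : ℝ) * (stirling2 (k + 1) p : ℝ)) * y ^ p
        + (p : ℝ) * (((p - 1).factorial : ℝ) * (stirling2 (k + 1) p : ℝ)) * y ^ (p + 1) := by
    intro p; ring
  rw [Finset.sum_congr rfl (fun p _ => split p), Finset.sum_add_distrib]
  -- reindex second sum
  have hre : ∑ p ∈ Finset.Icc 1 (k + 1),
      (p : ℝ) * (((p - 1).factorial : ℝ) * (stirling2 (k + 1) p : ℝ)) * y ^ (p + 1)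
      = ∑ p ∈ Finset.Icc 2 (k + 2),
        ((p - 1 : ℕ) : ℝ) * (((p - 1 - 1).factorial : ℝ) * (stirling2 (k + 1) (p - 1) : ℝ)) * y ^ p := by
    rw [Finset.sum_nbij' (i := fun p => p + 1) (j := fun p => p - 1)]
    · intro a ha; simp only [Finset.mem_Icc] at ha ⊢; omega
    · intro a ha; simp only [Finset.mem_Icc] at ha ⊢; omega
    · intro a ha; simp only [Finset.mem_Icc] at ha; omega
    · intro a ha; simp only [Finset.mem_Icc] at ha; omega
    · intro a ha
      simp only [Nat.add_sub_cancel]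
  rw [hre]
  -- extend first sum to Icc 1 (k+2)
  have hext1 : ∑ p ∈ Finset.Icc 1 (k + 1),
      (p : ℝ) * (((p - 1).factorial : ℝ) * (stirling2 (k + 1) p : ℝ)) * y ^ p
      = ∑ p ∈ Finset.Icc 1 (k + 2),
        (p : ℝ) * (((p - 1).factorial : ℝ) * (stirling2 (k + 1) p : ℝ)) * y ^ p := by
    have hins : Finset.Icc 1 (k + 2) = insert (k + 2) (Finset.Icc 1 (k + 1)) := by
      ext x; simp only [Finset.mem_insert, Finset.mem_Icc]; omega
    rw [hins, Finset.sum_insert (by simp [Finset.mem_Icc])]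
    rw [stirling2_eq_zero_of_lt (k + 1) (k + 2) (by omega) (by omega)]
    simp
  have hext2 : ∑ p ∈ Finset.Icc 2 (k + 2),
      ((p - 1 : ℕ) : ℝ) * (((p - 1 - 1).factorial : ℝ) * (stirling2 (k + 1) (p - 1) : ℝ)) * y ^ p
      = ∑ p ∈ Finset.Icc 1 (k + 2),
        ((p - 1 : ℕ) : ℝ) * (((p - 1 - 1).factorial : ℝ) * (stirling2 (k + 1) (p - 1) : ℝ)) * y ^ p := by
    have hins : Finset.Icc 1 (k + 2) = insert 1 (Finset.Icc 2 (k + 2)) := by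
      ext x; simp only [Finset.mem_insert, Finset.mem_Icc]; omega
    rw [hins, Finset.sum_insert (by simp [Finset.mem_Icc])]
    simp
  rw [hext1, hext2, ← Finset.sum_add_distrib]
  apply Finset.sum_congr rfl
  intro p hp
  simp only [Finset.mem_Icc] at hp
  rw [coeff_rec k p hp.1]
  ring

lemma exp_sub_one_ne (t : ℝ) (ht : 0 < t) : Real.exp t - 1 ≠ 0 := by
  have h : (1 : ℝ) < Real.exp t := by
    calc (1 : ℝ) = Real.exp 0 := by simp
      _ < Real.exp t := Real.exp_lt_exp.mpr ht
  linarith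

lemma main (k : ℕ) : ∀ t : ℝ, 0 < t →
    iteratedDeriv k (fun x : ℝ => 1 / (Real.exp x - 1)) t =
      (-1 : ℝ) ^ k *
        ∑ p ∈ Finset.Icc 1 (k + 1),
          ((p - 1).factorial : ℝ) * (stirling2 (k + 1) p : ℝ) *
            (1 / (Real.exp t - 1)) ^ p := by
  induction k with
  | zero =>
    intro t ht
    rw [iteratedDeriv_zero]
    simp only [pow_zero, one_mul, Nat.zero_add, Finset.Icc_self, Finset.sum_singleton]
    have h1 : stirling2 1 1 = 1 := by
      simp [stirling2]
    rw [h1]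
    norm_num
  | succ k ih =>
    intro t ht
    have hne := exp_sub_one_ne t ht
    set y : ℝ := 1 / (Real.exp t - 1) with hy
    have hd : HasDerivAt (fun x : ℝ => 1 / (Real.exp x - 1))
        (-(Real.exp t) / (Real.exp t - 1) ^ 2) t := by
      simpa [one_div] using ((Real.hasDerivAt_exp t).sub_const 1).fun_inv hne
    have hsum : HasDerivAt
        (fun x : ℝ => (-1 : ℝ) ^ k *
          ∑ p ∈ Finset.Icc 1 (k + 1),
            ((p - 1).factorial : ℝ) * (stirling2 (k + 1) p : ℝ) *
              (1 / (Real.exp x - 1)) ^ p)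
        ((-1 : ℝ) ^ k *
          ∑ p ∈ Finset.Icc 1 (k + 1),
            ((p - 1).factorial : ℝ) * (stirling2 (k + 1) p : ℝ) *
              ((p : ℝ) * (1 / (Real.exp t - 1)) ^ (p - 1) *
                (-(Real.exp t) / (Real.exp t - 1) ^ 2))) t := by
      exact (HasDerivAt.fun_sum (fun p _ => (hd.pow p).const_mul
        (((p - 1).factorial : ℝ) * (stirling2 (k + 1) p : ℝ)))).const_mul _
    have hev : iteratedDeriv k (fun x : ℝ => 1 / (Real.exp x - 1)) =ᶠ[nhds t]
        (fun x : ℝ => (-1 : ℝ) ^ k *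
          ∑ p ∈ Finset.Icc 1 (k + 1),
            ((p - 1).factorial : ℝ) * (stirling2 (k + 1) p : ℝ) *
              (1 / (Real.exp x - 1)) ^ p) := by
      apply Filter.eventuallyEq_of_mem (isOpen_Ioi.mem_nhds ht)
      intro x hx
      exact ih x hx
    rw [iteratedDeriv_succ, hev.deriv_eq, hsum.deriv]
    -- algebra
    have hkey : -(Real.exp t) / (Real.exp t - 1) ^ 2 = -(y + y ^ 2) := by
      rw [hy]
      field_simp
      ring
    have hterm : ∀ p ∈ Finset.Icc 1 (k + 1),
        ((p - 1).factorial : ℝ) * (stirling2 (k + 1) p : ℝ) *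
          ((p : ℝ) * y ^ (p - 1) * (-(Real.exp t) / (Real.exp t - 1) ^ 2))
        = -(((p - 1).factorial : ℝ) * (stirling2 (k + 1) p : ℝ) *
            ((p : ℝ) * (y ^ p + y ^ (p + 1)))) := by
      intro p hp
      simp only [Finset.mem_Icc] at hp
      rw [hkey]
      have h1 : y ^ (p - 1) * y = y ^ p := by
        rw [← pow_succ]
        congr 1
        omega
      have h2 : y ^ (p - 1) * y ^ 2 = y ^ (p + 1) := by
        rw [← pow_add]
        congr 1
        omega
      calc ((p - 1).factorial : ℝ) * (stirling2 (k + 1) p : ℝ) *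
            ((p : ℝ) * y ^ (p - 1) * (-(y + y ^ 2)))
          = -(((p - 1).factorial : ℝ) * (stirling2 (k + 1) p : ℝ) *
              ((p : ℝ) * (y ^ (p - 1) * y + y ^ (p - 1) * y ^ 2))) := by ring
        _ = _ := by rw [h1, h2]
    rw [Finset.sum_congr rfl hterm, Finset.sum_neg_distrib]
    rw [show ∑ p ∈ Finset.Icc 1 (k + 1),
        ((p - 1).factorial : ℝ) * (stirling2 (k + 1) p : ℝ) * ((p : ℝ) * (y ^ p + y ^ (p + 1)))
      = ∑ p ∈ Finset.Icc 1 (k + 2),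
        ((p - 1).factorial : ℝ) * (stirling2 (k + 2) p : ℝ) * y ^ p from poly_id k y]
    rw [pow_succ]
    ring

theorem stmt9 (k : ℕ) (t : ℝ) (ht : 0 < t) :
    iteratedDeriv k (fun x : ℝ => 1 / (Real.exp x - 1)) t =
      (-1 : ℝ) ^ k *
        ∑ p ∈ Finset.Icc 1 (k + 1),
          ((p - 1).factorial : ℝ) * (stirling2 (k + 1) p : ℝ) *
            (1 / (Real.exp t - 1)) ^ p := by
  exact main k t ht
end

section
/- For every integer k ≥ 1, ∫₀^∞ t^{2k-1}/(e^{2πt} - 1) dt = (-1)^{k-1} · B_{2k}/(4k), where B_{2k} are the Bernoulli numbers. -/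
open Real Set MeasureTheory Complex

lemma aux_hasSum (t : ℝ) (ht : 0 < t) :
    HasSum (fun n : ℕ ↦ (if n = 0 then (0:ℝ) else 1) * Real.exp (-(2 * π * n) * t))
      (1 / (Real.exp (2 * π * t) - 1)) := by
  set r : ℝ := Real.exp (-(2 * π * t)) with hr
  have hπ := Real.pi_pos
  have hrpos : 0 < r := Real.exp_pos _
  have hr1 : r < 1 := by
    rw [hr, Real.exp_lt_one_iff]
    nlinarith
  have hgeom : HasSum (fun n : ℕ ↦ r * r ^ n) (r * (1 - r)⁻¹) :=
    (hasSum_geometric_of_lt_one hrpos.le hr1).mul_left r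
  have hexp1 : (1:ℝ) < Real.exp (2 * π * t) := by
    rw [Real.one_lt_exp_iff]; positivity
  have hsumval : r * (1 - r)⁻¹ = 1 / (Real.exp (2 * π * t) - 1) := by
    rw [hr]
    rw [show -(2 * π * t) = -(2 * π * t) from rfl, Real.exp_neg]
    have h0 : Real.exp (2 * π * t) ≠ 0 := (Real.exp_pos _).ne'
    have h1 : Real.exp (2 * π * t) - 1 ≠ 0 := by nlinarith
    field_simp
  rw [← hsumval]
  have key : ∀ n : ℕ, (if n + 1 = 0 then (0:ℝ) else 1) * Real.exp (-(2 * π * (n+1:ℕ)) * t)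
      = r * r ^ n := by
    intro n
    rw [if_neg (Nat.succ_ne_zero n), one_mul, hr, ← Real.exp_nat_mul, ← Real.exp_add]
    push_cast
    ring_nf
  refine (hasSum_nat_add_iff' 1).mp ?_
  have h0 : (∑ i ∈ Finset.range 1, (if i = 0 then (0:ℝ) else 1) * rexp (-(2 * π * i) * t)) = 0 := by
    simp
  rw [h0, sub_zero]
  exact HasSum.congr_fun hgeom (fun n => key n)

open Real in
theorem stmt10 (k : ℕ) (hk : 1 ≤ k) :
    ∫ t in Set.Ioi (0 : ℝ), t ^ (2 * k - 1) / (Real.exp (2 * π * t) - 1) =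
      (-1 : ℝ) ^ (k - 1) * (bernoulli (2 * k) : ℝ) / (4 * k) := by
  obtain ⟨j, rfl⟩ : ∃ j, k = j + 1 := ⟨k - 1, (Nat.succ_pred_eq_of_pos hk).symm⟩
  set k := j + 1 with hkdef
  have hπ := Real.pi_pos
  set m : ℕ := 2 * k with hm
  have hm1 : 1 < m := by omega
  set a : ℕ → ℂ := fun n => if n = 0 then 0 else 1 with ha
  set p : ℕ → ℝ := fun n => 2 * π * n with hp
  set F : ℝ → ℂ := fun t => ((1 / (Real.exp (2 * π * t) - 1) : ℝ) : ℂ) with hF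
  have hp' : ∀ n, a n = 0 ∨ 0 < p n := by
    intro n
    rcases Nat.eq_zero_or_pos n with h | h
    · exact Or.inl (by simp [ha, h])
    · refine Or.inr ?_
      have : (0:ℝ) < n := by exact_mod_cast h
      simp only [hp]; positivity
  have hs : 0 < ((m : ℂ)).re := by
    simp only [Complex.natCast_re]
    positivity
  have hFsum : ∀ t ∈ Set.Ioi (0:ℝ), HasSum (fun n ↦ a n * Real.exp (-p n * t)) (F t) := by
    intro t ht
    have h2 := (aux_hasSum t ht).map Complex.ofRealCLM Complex.ofRealCLM.continuous
    have h3 : HasSum (fun n : ℕ => ((((if n = 0 then (0:ℝ) else 1) *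
        Real.exp (-(2 * π * n) * t)) : ℝ) : ℂ)) (F t) := h2
    refine h3.congr_fun fun n => ?_
    rcases eq_or_ne n 0 with h | h
    · simp [ha, h]
    · simp [ha, hp, h]
  have h_sum : Summable fun n ↦ ‖a n‖ / (p n) ^ ((m:ℂ)).re := by
    have hre : ((m:ℂ)).re = (m : ℝ) := Complex.natCast_re m
    rw [hre]
    have hb : Summable fun n : ℕ ↦ 1 / (n:ℝ) ^ 2 :=
      summable_one_div_nat_pow.mpr one_lt_two
    refine Summable.of_nonneg_of_le (fun n => by positivity) (fun n => ?_) hb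
    rcases Nat.eq_zero_or_pos n with h | h
    · simp [ha, h]
    · have hn1 : (1:ℝ) ≤ n := by exact_mod_cast h
      have hnorm : ‖a n‖ = 1 := by simp [ha, h.ne']
      rw [hnorm, Real.rpow_natCast]
      apply one_div_le_one_div_of_le (by positivity)
      calc (n:ℝ) ^ 2 ≤ (n:ℝ) ^ m := pow_le_pow_right₀ hn1 (by omega)
        _ ≤ (p n) ^ m := by
            apply pow_le_pow_left₀ (by positivity)
            simp only [hp]
            nlinarith [Real.pi_gt_three]
  have key := hasSum_mellin hp' hs hFsum h_sum
  -- evaluate the mellin transform as the real integral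
  have hmel : mellin F (m : ℂ) =
      ((∫ t in Set.Ioi (0:ℝ), t ^ (2 * k - 1) / (Real.exp (2 * π * t) - 1) : ℝ) : ℂ) := by
    calc mellin F (m : ℂ)
        = ∫ t in Set.Ioi (0:ℝ), (((t ^ (2 * k - 1) / (Real.exp (2 * π * t) - 1) : ℝ)) : ℂ) := by
          rw [mellin]
          refine setIntegral_congr_fun measurableSet_Ioi (fun t ht => ?_)
          have hcast : ((m:ℂ) - 1) = ((m - 1 : ℕ) : ℂ) := by
            push_cast [Nat.cast_sub hm1.le]; ring
          rw [hcast, Complex.cpow_natCast, smul_eq_mul, hF]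
          push_cast
          rw [div_eq_mul_inv, div_eq_mul_inv, one_mul]
      _ = _ := integral_ofReal
  -- evaluate the sum
  have htsum : ∑' n, Complex.Gamma (m:ℂ) * a n / ((p n : ℂ)) ^ (m:ℂ)
      = Complex.Gamma (m:ℂ) / (2 * π : ℂ) ^ m * riemannZeta m := by
    have hterm : ∀ n : ℕ, Complex.Gamma (m:ℂ) * a n / ((p n : ℂ)) ^ (m:ℂ)
        = Complex.Gamma (m:ℂ) / (2 * π : ℂ) ^ m * (1 / (n:ℂ) ^ m) := by
      intro n
      rw [Complex.cpow_natCast]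
      rcases Nat.eq_zero_or_pos n with h | h
      · simp [ha, hp, h, zero_pow (by omega : m ≠ 0)]
      · have hpn : ((p n : ℂ)) = (2 * π : ℂ) * n := by simp [hp]
        have han : a n = 1 := by simp [ha, h.ne']
        rw [hpn, mul_pow, han]
        have h1 : ((2*π:ℂ))^m ≠ 0 := by
          apply pow_ne_zero
          simp only [ne_eq, mul_eq_zero, not_or]
          exact ⟨by norm_num, by exact_mod_cast Real.pi_ne_zero⟩
        have h2 : ((n:ℂ))^m ≠ 0 := by
          apply pow_ne_zero
          exact_mod_cast h.ne'
        field_simp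
      
    rw [tsum_congr hterm, tsum_mul_left, ← zeta_nat_eq_tsum_of_gt_one hm1]
  rw [hmel] at key
  have keyval : ((∫ t in Set.Ioi (0:ℝ), t ^ (2 * k - 1) / (Real.exp (2 * π * t) - 1) : ℝ) : ℂ)
      = Complex.Gamma (m:ℂ) / (2 * π : ℂ) ^ m * riemannZeta m := by
    rw [← key.tsum_eq, htsum]
  -- plug in Gamma and zeta values
  have hGamma : Complex.Gamma (m:ℂ) = (((2*j+1).factorial : ℕ) : ℂ) := by
    have h1 : (m:ℂ) = (((2*j+1 : ℕ)) : ℂ) + 1 := by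
      push_cast [hm, hkdef]; ring
    rw [h1, Complex.Gamma_nat_eq_factorial]
  have hzeta := riemannZeta_two_mul_nat (k := k) (by omega)
  have hcast2 : ((m:ℕ):ℂ) = 2 * (k:ℂ) := by push_cast [hm]; ring
  rw [hGamma, hcast2, hzeta] at keyval
  -- final algebra
  have hfinal : ((((2*j+1).factorial : ℕ) : ℂ)) / (2 * (π:ℂ)) ^ m *
      ((-1) ^ (k + 1) * (2 : ℂ) ^ (2 * k - 1) * (π : ℂ) ^ (2 * k) * (bernoulli (2 * k) : ℂ)
        / ((2 * k).factorial : ℂ))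
      = (((-1 : ℝ) ^ (k - 1) * (bernoulli (2 * k) : ℝ) / (4 * k) : ℝ) : ℂ) := by
    have hfac : (((2*k).factorial : ℕ) : ℂ) = ((2*k : ℕ) : ℂ) * (((2*j+1).factorial : ℕ) : ℂ) := by
      rw [show 2*k = (2*j+1)+1 by omega, Nat.factorial_succ]
      push_cast; ring
    have hπne : (π:ℂ) ≠ 0 := by exact_mod_cast Real.pi_ne_zero
    have hfacne : (((2*j+1).factorial : ℕ):ℂ) ≠ 0 := by
      exact_mod_cast (Nat.factorial_pos _).ne'
    rw [hfac]
    have he1 : k + 1 = j + 2 := by omega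
    have he2 : k - 1 = j := by omega
    have he3 : 2 * k - 1 = 2 * j + 1 := by omega
    have he4 : 2 * k = 2 * j + 2 := by omega
    rw [he1, he2, he3, he4, hm, he4]
    have hjne : ((j:ℂ) + 1) ≠ 0 := by
      intro hcon
      have h' : ((j:ℂ) + 1) = ((j+1 : ℕ) : ℂ) := by push_cast; ring
      rw [h'] at hcon
      exact_mod_cast hcon
    have hd1 : ((2 * (π:ℂ)) ^ (2*j+2) * (((2*j+2:ℕ):ℂ) * (((2*j+1).factorial : ℕ) : ℂ))) ≠ 0 := by
      apply mul_ne_zero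
      · apply pow_ne_zero
        exact mul_ne_zero two_ne_zero hπne
      · apply mul_ne_zero
        · exact_mod_cast (by omega : (2*j+2:ℕ) ≠ 0)
        · exact hfacne
    have hd2 : ((4 : ℂ) * ((j:ℂ)+1)) ≠ 0 := mul_ne_zero (by norm_num) hjne
    rw [div_mul_div_comm]
    push_cast
    push_cast at hd1
    rw [hkdef]; push_cast
    rw [div_eq_div_iff hd1 hd2]
    ring
  have : ((∫ t in Set.Ioi (0:ℝ), t ^ (2 * k - 1) / (Real.exp (2 * π * t) - 1) : ℝ) : ℂ)
      = (((-1 : ℝ) ^ (k - 1) * (bernoulli (2 * k) : ℝ) / (4 * k) : ℝ) : ℂ) := by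
    rw [keyval]
    exact hfinal
  exact_mod_cast this
end

section
/- For every v > 0, the function K₂(v) = 2/v³ - 2/(e^v - 1)³ - 3/(e^v - 1)² - 1/(e^v - 1) is positive; equivalently, 2e^{3v} - e^{2v}(v³ + 6) - e^v(v³ - 6) - 2 > 0 for v > 0. -/
set_option maxHeartbeats 1000000

/-- Quartic Taylor lower bound for the exponential. -/
lemma exp_quartic_le {t : ℝ} (ht : 0 ≤ t) :
    1 + t + t ^ 2 / 2 + t ^ 3 / 6 + t ^ 4 / 24 ≤ Real.exp t := by
  have h := Real.sum_le_exp_of_nonneg ht 5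
  simp [Finset.sum_range_succ, Nat.factorial] at h
  nlinarith [h]

/-- `sinh`-type lower bound: `(E - 1/E)/2 ≥ t + t^3/6` for `E = exp t`, `t ≥ 0`. -/
lemma half_sub_inv_ge {t : ℝ} (ht : 0 ≤ t) :
    t + t ^ 3 / 6 ≤ (Real.exp t - (Real.exp t)⁻¹) / 2 := by
  set P : ℝ := 1 + t + t ^ 2 / 2 + t ^ 3 / 6 + t ^ 4 / 24 with hPdef
  have hP : P ≤ Real.exp t := exp_quartic_le ht
  have hPpos : 0 < P := by positivity
  have hPne : P ≠ 0 := ne_of_gt hPpos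
  have hEpos : 0 < Real.exp t := Real.exp_pos t
  have hinv : (Real.exp t)⁻¹ ≤ P⁻¹ := by
    gcongr
  have hmid : t + t ^ 3 / 6 ≤ (P - P⁻¹) / 2 := by
    have hkey : (P - P⁻¹) / 2 - (t + t ^ 3 / 6)
        = (t ^ 6 / 72 + t ^ 8 / 576) / (2 * P) := by
      field_simp
      rw [hPdef]
      ring
    nlinarith [hkey, div_nonneg (by positivity : (0:ℝ) ≤ t ^ 6 / 72 + t ^ 8 / 576)
      (by positivity : (0:ℝ) ≤ 2 * P)]
  have hmono : (P - P⁻¹) / 2 ≤ (Real.exp t - (Real.exp t)⁻¹) / 2 := by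
    have := sub_le_sub hP hinv
    linarith
  linarith

theorem stmt16 (v : ℝ) (hv : 0 < v) :
    0 < 2 / v ^ 3 - 2 / (Real.exp v - 1) ^ 3 - 3 / (Real.exp v - 1) ^ 2
        - 1 / (Real.exp v - 1) ∧
      0 < 2 * Real.exp (3 * v) - Real.exp (2 * v) * (v ^ 3 + 6)
        - Real.exp v * (v ^ 3 - 6) - 2 := by
  obtain ⟨t, htdef⟩ : ∃ t : ℝ, t = v / 2 := ⟨v / 2, rfl⟩
  have ht : 0 < t := by rw [htdef]; positivity
  obtain ⟨E, hEdef⟩ : ∃ E : ℝ, E = Real.exp t := ⟨_, rfl⟩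
  have hEpos : 0 < E := hEdef ▸ Real.exp_pos t
  have hE1 : 1 < E := by
    rw [hEdef]
    calc (1:ℝ) = Real.exp 0 := (Real.exp_zero).symm
    _ < Real.exp t := Real.exp_lt_exp.mpr ht
  obtain ⟨s, hsdef⟩ : ∃ s : ℝ, s = (E - E⁻¹) / 2 := ⟨_, rfl⟩
  obtain ⟨c, hcdef⟩ : ∃ c : ℝ, c = (E + E⁻¹) / 2 := ⟨_, rfl⟩
  have hEne : E ≠ 0 := ne_of_gt hEpos
  have hspos : 0 < s := by
    have h1 : E⁻¹ < 1 := by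
      rw [inv_lt_one_iff₀]; right; exact hE1
    rw [hsdef]; linarith
  have hcpos : 0 < c := by
    rw [hcdef]; positivity
  have hcsq : c ^ 2 = 1 + s ^ 2 := by
    rw [hcdef, hsdef]
    field_simp
    ring
  -- lower bound for s
  obtain ⟨p, hpdef⟩ : ∃ p : ℝ, p = t + t ^ 3 / 6 := ⟨_, rfl⟩
  have hppos : 0 < p := by rw [hpdef]; positivity
  have hsp : p ≤ s := by
    rw [hpdef, hsdef, hEdef]
    exact half_sub_inv_ge ht.le
  -- key inequality: s^6 - t^6 * s^2 - t^6 > 0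
  have h1 : 0 ≤ s ^ 2 - p ^ 2 := by nlinarith [hsp, hppos]
  have hp4 : t ^ 6 ≤ 3 * p ^ 4 := by
    have hexp : 3 * p ^ 4 - t ^ 6
        = 3 * t ^ 4 + t ^ 6 + t ^ 8 / 2 + t ^ 10 / 18 + t ^ 12 / 432 := by
      rw [hpdef]; ring
    nlinarith [hexp, pow_pos ht 4, pow_pos ht 6, pow_pos ht 8, pow_pos ht 10, pow_pos ht 12]
  have h2 : 0 ≤ s ^ 4 + s ^ 2 * p ^ 2 + p ^ 4 - t ^ 6 := by
    have hs4 : p ^ 4 ≤ s ^ 4 := by nlinarith [hsp, hppos, hspos]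
    have hsp2 : p ^ 4 ≤ s ^ 2 * p ^ 2 := by nlinarith [hsp, hppos, hspos]
    linarith [hp4]
  have h3 : 0 < p ^ 6 - t ^ 6 * p ^ 2 - t ^ 6 := by
    have hexp : p ^ 6 - t ^ 6 * p ^ 2 - t ^ 6
        = t ^ 10 / 12 + 7 * t ^ 12 / 108 + 5 * t ^ 14 / 432 + t ^ 16 / 1296 + t ^ 18 / 46656 := by
      rw [hpdef]; ring
    rw [hexp]; positivity
  have hkey : 0 < s ^ 6 - t ^ 6 * s ^ 2 - t ^ 6 := by
    have hid : s ^ 6 - t ^ 6 * s ^ 2 - t ^ 6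
        = (s ^ 2 - p ^ 2) * (s ^ 4 + s ^ 2 * p ^ 2 + p ^ 4 - t ^ 6)
          + (p ^ 6 - t ^ 6 * p ^ 2 - t ^ 6) := by ring
    nlinarith [mul_nonneg h1 h2, h3, hid]
  -- hence s^3 > t^3 * c
  have hcube : t ^ 3 * c < s ^ 3 := by
    have hsq : (t ^ 3 * c) ^ 2 < (s ^ 3) ^ 2 := by
      have h4 : (t ^ 3 * c) ^ 2 = t ^ 6 * (1 + s ^ 2) := by
        rw [mul_pow, hcsq]; ring
      nlinarith [hkey, h4]
    exact lt_of_pow_lt_pow_left₀ 2 (by positivity) hsq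
  -- rewrite the exponential expressions
  have e1 : Real.exp v = E ^ 2 := by
    rw [show v = t + t by rw [htdef]; ring, Real.exp_add, hEdef]; ring
  have e2 : Real.exp (2 * v) = E ^ 4 := by
    rw [show 2 * v = (t + t) + (t + t) by rw [htdef]; ring, Real.exp_add, Real.exp_add, hEdef]
    ring
  have e3 : Real.exp (3 * v) = E ^ 6 := by
    rw [show 3 * v = ((t + t) + (t + t)) + (t + t) by rw [htdef]; ring,
      Real.exp_add, Real.exp_add, Real.exp_add, hEdef]
    ring
  have hiden : 2 * Real.exp (3 * v) - Real.exp (2 * v) * (v ^ 3 + 6)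
      - Real.exp v * (v ^ 3 - 6) - 2 = 16 * E ^ 3 * (s ^ 3 - t ^ 3 * c) := by
    rw [e1, e2, e3, hsdef, hcdef, show v = 2 * t by rw [htdef]; ring]
    field_simp
    ring
  have main2 : 0 < 2 * Real.exp (3 * v) - Real.exp (2 * v) * (v ^ 3 + 6)
      - Real.exp v * (v ^ 3 - 6) - 2 := by
    rw [hiden]
    have h5 : 0 < s ^ 3 - t ^ 3 * c := by linarith
    positivity
  refine ⟨?_, main2⟩
  have hx1 : 0 < Real.exp v - 1 := by
    rw [e1]; nlinarith [hE1]
  have hx1' : Real.exp v - 1 ≠ 0 := ne_of_gt hx1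
  have hvne : v ≠ 0 := ne_of_gt hv
  obtain ⟨X, hXdef⟩ : ∃ X : ℝ, X = Real.exp v := ⟨_, rfl⟩
  have hX2 : Real.exp (2 * v) = X ^ 2 := by rw [hXdef, e1, e2]; ring
  have hX3 : Real.exp (3 * v) = X ^ 3 := by rw [hXdef, e1, e3]; ring
  have hX1 : 0 < X - 1 := by rw [hXdef]; exact hx1
  have hX1' : X - 1 ≠ 0 := ne_of_gt hX1
  have hq : 2 / v ^ 3 - 2 / (Real.exp v - 1) ^ 3 - 3 / (Real.exp v - 1) ^ 2
      - 1 / (Real.exp v - 1)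
      = (2 * Real.exp (3 * v) - Real.exp (2 * v) * (v ^ 3 + 6)
        - Real.exp v * (v ^ 3 - 6) - 2) / (v ^ 3 * (Real.exp v - 1) ^ 3) := by
    rw [← hXdef, hX2, hX3]
    field_simp
    ring
  rw [hq]
  exact div_pos main2 (by positivity)
end
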